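/- arXiv:2411.05808 — 2 statements merged into one kernel-verified Lean document; each statement's English description precedes it below -/
import Mathlib

section
/- For every δ > 0 and every ε ∈ (0, α−d) there exist a constant C > 0 and R_0 > 0 such that for all R ≥ R_0 and all t ≥ δ, (R^d f(R)^k)^{−1} ∫_{(ℝ^d)^k} 1{ min_{1≤i≤k} |y_i| ≥ t R } h_k(y_1,…,y_k) Π_{i=1}^k f(y_i) dy ≤ C · t^{d−α+ε}. -/
open MeasureTheory Filter Topology Set Module
open scoped ENNReal NNReal

noncomputable section

/-- Euclidean space `ℝ^d`. -/
abbrev Euc (d : ℕ) : Type := EuclideanSpace ℝ (Fin d)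

/-- Safe access to the `i`-th entry of a finite tuple of points (junk value `0` out of range). -/
def vget {d n : ℕ} (z : Fin n → Euc d) (i : ℕ) : Euc d :=
  if h : i < n then z ⟨i, h⟩ else 0

/-- The `k`-tuple `(0, z₁, …, z_{k-1})`. -/
def padFirst {d : ℕ} (k : ℕ) {n : ℕ} (z : Fin n → Euc d) : Fin k → Euc d :=
  fun j => if (j : ℕ) = 0 then 0 else vget z ((j : ℕ) - 1)

/-- The `k`-tuple `(0, z₁, …, z_{ℓ-1}, z_k, …, z_{2k-ℓ-1})`. -/
def padSecond {d : ℕ} (k ℓ : ℕ) {n : ℕ} (z : Fin n → Euc d) : Fin k → Euc d :=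
  fun j => if (j : ℕ) = 0 then 0
    else if (j : ℕ) < ℓ then vget z ((j : ℕ) - 1)
    else vget z ((j : ℕ) + k - ℓ - 1)

/-- The sub-tuple `(y₁, …, y_k)` of a `(2k-ℓ)`-tuple `y`. -/
def sel1 {d : ℕ} (k : ℕ) {n : ℕ} (y : Fin n → Euc d) : Fin k → Euc d :=
  fun i => vget y (i : ℕ)

/-- The sub-tuple `(y₁, …, y_ℓ, y_{k+1}, …, y_{2k-ℓ})` of a `(2k-ℓ)`-tuple `y`. -/
def sel2 {d : ℕ} (k ℓ : ℕ) {n : ℕ} (y : Fin n → Euc d) : Fin k → Euc d :=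
  fun i => if (i : ℕ) < ℓ then vget y (i : ℕ) else vget y ((i : ℕ) + (k - ℓ))

/-- The surface area `s_{d-1}` of the unit sphere in `ℝ^d`. -/
def sArea (d : ℕ) : ℝ := d * (volume (Metric.ball (0 : Euc d) 1)).toReal

section AuxLemmas

private lemma uct_aux (g : ℝ → ℝ) (hg : Measurable g)
    (hconv : ∀ u : ℝ, Tendsto (fun s => g (s + u) - g s) atTop (𝓝 0))
    (T : ℝ) (hT : 0 < T) (ε : ℝ) (hε : 0 < ε) :
    ∃ M : ℝ, ∀ s ≥ M, ∀ u ∈ Set.Icc (0:ℝ) T, |g (s + u) - g s| ≤ ε := by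
  by_contra hcon
  push_neg at hcon
  choose s hs u hu hbad using hcon
  set σ : ℕ → ℝ := fun n => s (n : ℝ) with hσdef
  set υ : ℕ → ℝ := fun n => u (n : ℝ) with hυdef
  have hσge : ∀ n : ℕ, (n : ℝ) ≤ σ n := fun n => hs _
  have hυmem : ∀ n : ℕ, υ n ∈ Set.Icc (0:ℝ) T := fun n => hu _
  have hσtop : Tendsto σ atTop atTop :=
    tendsto_atTop_mono hσge tendsto_natCast_atTop_atTop
  have hσυtop : Tendsto (fun n => σ n + υ n) atTop atTop :=
    tendsto_atTop_mono (fun n => le_add_of_le_of_nonneg (hσge n) (hυmem n).1)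
      tendsto_natCast_atTop_atTop
  -- the two families of good sets
  set E : ℕ → Set ℝ := fun n => Set.Icc 0 (2*T) ∩
    ⋂ (m : ℕ), ⋂ (_ : n ≤ m), {v | |g (σ m + v) - g (σ m)| ≤ ε/4} with hEdef
  set F : ℕ → Set ℝ := fun n => Set.Icc 0 (2*T) ∩
    ⋂ (m : ℕ), ⋂ (_ : n ≤ m), {v | |g (σ m + υ m + v) - g (σ m + υ m)| ≤ ε/4} with hFdef
  have hmeas : ∀ (a : ℕ → ℝ) (n : ℕ), MeasurableSet (Set.Icc 0 (2*T) ∩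
      ⋂ (m : ℕ), ⋂ (_ : n ≤ m), {v | |g (a m + v) - g (a m)| ≤ ε/4}) := by
    intro a n
    refine measurableSet_Icc.inter (MeasurableSet.iInter fun m => MeasurableSet.iInter fun _ => ?_)
    exact measurableSet_le (((hg.comp (measurable_const.add measurable_id)).sub
      measurable_const).abs) measurable_const
  have hEmeas : ∀ n, MeasurableSet (E n) := fun n => hmeas σ n
  have hFmeas : ∀ n, MeasurableSet (F n) := fun n => hmeas (fun m => σ m + υ m) n
  have hmono : ∀ (a : ℕ → ℝ), Monotone (fun n => Set.Icc 0 (2*T) ∩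
      ⋂ (m : ℕ), ⋂ (_ : n ≤ m), {v | |g (a m + v) - g (a m)| ≤ ε/4}) := by
    intro a n n' hnn' v hv
    obtain ⟨hv1, hv2⟩ := hv
    simp only [Set.mem_iInter] at hv2
    exact ⟨hv1, by simp only [Set.mem_iInter]; exact fun m hm => hv2 m (hnn'.trans hm)⟩
  have hunion : ∀ (a : ℕ → ℝ), Tendsto a atTop atTop →
      (⋃ n, (Set.Icc 0 (2*T) ∩
        ⋂ (m : ℕ), ⋂ (_ : n ≤ m), {v | |g (a m + v) - g (a m)| ≤ ε/4})) = Set.Icc 0 (2*T) := by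
    intro a ha
    apply Set.Subset.antisymm
    · exact Set.iUnion_subset fun n => Set.inter_subset_left
    · intro v hv
      have h0 : Tendsto (fun m => g (a m + v) - g (a m)) atTop (𝓝 0) := by
        have := (hconv v).comp ha
        exact this
      have hev : ∀ᶠ m in atTop, |g (a m + v) - g (a m)| ≤ ε/4 := by
        have := NormedAddCommGroup.tendsto_nhds_zero.mp h0 (ε/4) (by linarith)
        filter_upwards [this] with m hm
        rw [Real.norm_eq_abs] at hm
        exact hm.le
      obtain ⟨N, hN⟩ := eventually_atTop.mp hev
      refine Set.mem_iUnion.mpr ⟨N, hv, ?_⟩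
      simp only [Set.mem_iInter]
      exact fun m hm => hN m hm
  have hvol : volume (Set.Icc (0:ℝ) (2*T)) = ENNReal.ofReal (2*T) := by
    rw [Real.volume_Icc]; ring_nf
  have hEtend : Tendsto (fun n => volume (E n)) atTop (𝓝 (ENNReal.ofReal (2*T))) := by
    have := tendsto_measure_iUnion_atTop (μ := volume) (hmono σ)
    rwa [hunion σ hσtop, hvol] at this
  have hFtend : Tendsto (fun n => volume (F n)) atTop (𝓝 (ENNReal.ofReal (2*T))) := by
    have := tendsto_measure_iUnion_atTop (μ := volume) (hmono (fun m => σ m + υ m))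
    rwa [hunion _ hσυtop, hvol] at this
  have hlt : ENNReal.ofReal (7*T/4) < ENNReal.ofReal (2*T) := by
    rw [ENNReal.ofReal_lt_ofReal_iff (by linarith)]; linarith
  obtain ⟨N, hvolE, hvolF⟩ :=
    ((hEtend.eventually_const_lt hlt).and (hFtend.eventually_const_lt hlt)).exists
  -- now fix m = N and find a common point
  set A : Set ℝ := E N ∩ Set.Icc (υ N) (2*T) with hAdef
  set B : Set ℝ := Set.Icc (υ N) (2*T) ∩ {v | v + -(υ N) ∈ F N} with hBdef
  have hυT : υ N ≤ T := (hυmem N).2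
  have hυ0 : 0 ≤ υ N := (hυmem N).1
  have hvolA : ENNReal.ofReal (7*T/4) < volume A + ENNReal.ofReal (υ N) := by
    refine lt_of_lt_of_le hvolE ?_
    calc volume (E N) ≤ volume (A ∪ Set.Ico 0 (υ N)) := by
          apply measure_mono
          intro v hv
          rcases le_or_gt (υ N) v with hc | hc
          · exact Or.inl ⟨hv, hc, hv.1.2⟩
          · exact Or.inr ⟨hv.1.1, hc⟩
      _ ≤ volume A + volume (Set.Ico 0 (υ N)) := measure_union_le _ _
      _ = volume A + ENNReal.ofReal (υ N) := by rw [Real.volume_Ico, sub_zero]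
  have hvolB : ENNReal.ofReal (7*T/4) < volume B + ENNReal.ofReal (υ N) := by
    have hpre : volume ((fun v => v + -(υ N)) ⁻¹' F N) = volume (F N) :=
      measure_preimage_add_right volume _ _
    refine lt_of_lt_of_le (lt_of_lt_of_le hvolF hpre.ge) ?_
    calc volume ((fun v => v + -(υ N)) ⁻¹' F N)
        ≤ volume (B ∪ Set.Ioc (2*T) (2*T + υ N)) := by
          apply measure_mono
          intro v hv
          have hvmem : v + -(υ N) ∈ Set.Icc 0 (2*T) := (Set.mem_preimage.mp hv).1
          rcases le_or_gt v (2*T) with hc | hc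
          · exact Or.inl ⟨⟨by linarith [hvmem.1], hc⟩, hv⟩
          · exact Or.inr ⟨hc, by linarith [hvmem.2]⟩
      _ ≤ volume B + volume (Set.Ioc (2*T) (2*T + υ N)) := measure_union_le _ _
      _ = volume B + ENNReal.ofReal (υ N) := by rw [Real.volume_Ioc, add_sub_cancel_left]
  have hABne : (A ∩ B).Nonempty := by
    rw [Set.nonempty_iff_ne_empty]
    intro hemp
    have hdisj : Disjoint A B := Set.disjoint_iff_inter_eq_empty.mpr hemp
    have hBmeas : MeasurableSet B := by
      refine measurableSet_Icc.inter ?_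
      exact (hFmeas N).preimage (measurable_id.add_const _)
    have hsub : A ∪ B ⊆ Set.Icc (υ N) (2*T) := by
      intro v hv
      rcases hv with hv | hv
      · exact hv.2
      · exact hv.1
    have hun : volume A + volume B ≤ ENNReal.ofReal (2*T - υ N) := by
      rw [← measure_union hdisj hBmeas]
      calc volume (A ∪ B) ≤ volume (Set.Icc (υ N) (2*T)) := measure_mono hsub
        _ = ENNReal.ofReal (2*T - υ N) := Real.volume_Icc
    have hsum : ENNReal.ofReal (7*T/4) + ENNReal.ofReal (7*T/4) <
        (volume A + ENNReal.ofReal (υ N)) + (volume B + ENNReal.ofReal (υ N)) :=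
      ENNReal.add_lt_add hvolA hvolB
    have hle : (volume A + ENNReal.ofReal (υ N)) + (volume B + ENNReal.ofReal (υ N)) ≤
        ENNReal.ofReal (2*T - υ N) + (ENNReal.ofReal (υ N) + ENNReal.ofReal (υ N)) := by
      calc (volume A + ENNReal.ofReal (υ N)) + (volume B + ENNReal.ofReal (υ N))
          = (volume A + volume B) + (ENNReal.ofReal (υ N) + ENNReal.ofReal (υ N)) := by ring
        _ ≤ ENNReal.ofReal (2*T - υ N) + (ENNReal.ofReal (υ N) + ENNReal.ofReal (υ N)) := by
            exact add_le_add hun le_rfl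
    have hfin : ENNReal.ofReal (2*T - υ N) + (ENNReal.ofReal (υ N) + ENNReal.ofReal (υ N)) ≤
        ENNReal.ofReal (7*T/4) + ENNReal.ofReal (7*T/4) := by
      rw [← ENNReal.ofReal_add (by linarith) (by linarith), ← ENNReal.ofReal_add (by linarith) (by positivity),
        ← ENNReal.ofReal_add (by linarith) (by linarith)]
      apply ENNReal.ofReal_le_ofReal
      linarith
    exact absurd (lt_of_lt_of_le (lt_of_lt_of_le hsum hle) hfin) (lt_irrefl _)
  obtain ⟨v, hvA, hvB⟩ := hABne
  have h1 : |g (σ N + v) - g (σ N)| ≤ ε/4 := by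
    have := hvA.1.2
    simp only [Set.mem_iInter] at this
    exact this N le_rfl
  have h2 : |g (σ N + υ N + (v + -(υ N))) - g (σ N + υ N)| ≤ ε/4 := by
    have := hvB.2
    simp only [Set.mem_setOf_eq] at this
    have h' := this.2
    simp only [Set.mem_iInter] at h'
    exact h' N le_rfl
  have heq : σ N + υ N + (v + -(υ N)) = σ N + v := by ring
  rw [heq] at h2
  have hbadN : ε < |g (σ N + υ N) - g (σ N)| := hbad _
  have htri : |g (σ N + υ N) - g (σ N)| ≤
      |g (σ N + υ N) - g (σ N + v)| + |g (σ N + v) - g (σ N)| := abs_sub_le _ _ _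
  rw [abs_sub_comm (g (σ N + υ N)) (g (σ N + v))] at htri
  linarith


private lemma potter_aux (f : ℝ → ℝ) (hfm : Measurable f) (hfnn : ∀ r, 0 ≤ f r)
    (hfpos : ∀ᶠ r in atTop, 0 < f r) (α : ℝ) (hα : 0 < α)
    (hfreg : ∀ r : ℝ, 0 < r → Tendsto (fun t => f (t * r) / f t) atTop (𝓝 (r ^ (-α))))
    (δ ε : ℝ) (hδ : 0 < δ) (hε : 0 < ε) (hεα : ε < α) :
    ∃ K M : ℝ, 0 < K ∧ 1 ≤ M ∧ (∀ x, M ≤ x → 0 < f x) ∧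
      ∀ x, M ≤ x → ∀ l, δ ≤ l → f (l * x) ≤ K * l ^ (ε - α) * f x := by
  obtain ⟨r₀', hr₀'⟩ := eventually_atTop.mp hfpos
  set r₀ : ℝ := max r₀' 1 with hr₀def
  have hr₀pos : ∀ r, r₀ ≤ r → 0 < f r := fun r hr => hr₀' r ((le_max_left _ _).trans hr)
  have hr₀1 : (1:ℝ) ≤ r₀ := le_max_right _ _
  set g : ℝ → ℝ := fun s => Real.log (f (Real.exp s)) + α * s with hgdef
  have hg : Measurable g :=
    (Real.measurable_log.comp (hfm.comp Real.measurable_exp)).add (measurable_id.const_mul α)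
  have hconv : ∀ u : ℝ, Tendsto (fun s => g (s + u) - g s) atTop (𝓝 0) := by
    intro u
    have hru : (0:ℝ) < Real.exp u := Real.exp_pos u
    have h1 := hfreg (Real.exp u) hru
    have h2 : Tendsto (fun s => f (Real.exp s * Real.exp u) / f (Real.exp s)) atTop
        (𝓝 (Real.exp u ^ (-α))) := h1.comp Real.tendsto_exp_atTop
    have hlim_pos : (0:ℝ) < Real.exp u ^ (-α) := Real.rpow_pos_of_pos hru _
    have h3 : Tendsto (fun s => Real.log (f (Real.exp s * Real.exp u) / f (Real.exp s))) atTop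
        (𝓝 (Real.log (Real.exp u ^ (-α)))) :=
      (Real.continuousAt_log (ne_of_gt hlim_pos)).tendsto.comp h2
    have hlogval : Real.log (Real.exp u ^ (-α)) = -α * u := by
      rw [Real.log_rpow hru, Real.log_exp]
    rw [hlogval] at h3
    have h4 : Tendsto (fun s => Real.log (f (Real.exp s * Real.exp u) / f (Real.exp s)) + α * u)
        atTop (𝓝 (-α * u + α * u)) := h3.add_const _
    have h5 : Tendsto (fun s => Real.log (f (Real.exp s * Real.exp u) / f (Real.exp s)) + α * u)
        atTop (𝓝 0) := by simpa using h4
    apply h5.congr'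
    have hev1 : ∀ᶠ s in atTop, r₀ ≤ Real.exp s :=
      Real.tendsto_exp_atTop.eventually (eventually_ge_atTop r₀)
    have hev2 : ∀ᶠ s in atTop, r₀ ≤ Real.exp s * Real.exp u := by
      have : Tendsto (fun s => Real.exp s * Real.exp u) atTop atTop := by
        have hcomp := Real.tendsto_exp_atTop.comp (tendsto_atTop_add_const_right atTop u tendsto_id)
        exact hcomp.congr fun s => by simp [Function.comp, Real.exp_add]
      exact this.eventually (eventually_ge_atTop r₀)
    filter_upwards [hev1, hev2] with s h1' h2'
    have hfs : f (Real.exp s) ≠ 0 := ne_of_gt (hr₀pos _ h1')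
    have hfsu : f (Real.exp s * Real.exp u) ≠ 0 := ne_of_gt (hr₀pos _ h2')
    rw [Real.log_div hfsu hfs]
    simp only [hgdef, Real.exp_add]
    ring
  have hlog2 : (0:ℝ) < Real.log 2 := Real.log_pos one_lt_two
  obtain ⟨M₁, hM₁⟩ := uct_aux g hg hconv (Real.log 2) hlog2 (ε * Real.log 2) (by positivity)
  set X₀ : ℝ := max (Real.exp M₁) r₀ with hX₀def
  have hX₀1 : (1:ℝ) ≤ X₀ := hr₀1.trans (le_max_right _ _)
  have hX₀pos : (0:ℝ) < X₀ := lt_of_lt_of_le one_pos hX₀1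
  have hX₀f : ∀ x, X₀ ≤ x → 0 < f x := fun x hx => hr₀pos x ((le_max_right _ _).trans hx)
  -- single step bounds for μ ∈ [1,2]
  have step : ∀ x, X₀ ≤ x → ∀ μ, 1 ≤ μ → μ ≤ 2 →
      f (μ * x) ≤ 2 ^ ε * μ ^ (-α) * f x ∧ 2 ^ (-ε) * μ ^ (-α) * f x ≤ f (μ * x) := by
    intro x hx μ hμ1 hμ2
    have hxpos : 0 < x := lt_of_lt_of_le hX₀pos hx
    have hμpos : 0 < μ := lt_of_lt_of_le one_pos hμ1
    have hs : M₁ ≤ Real.log x := by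
      rw [← Real.log_exp M₁]
      exact Real.log_le_log (Real.exp_pos _) ((le_max_left _ _).trans hx)
    have hu : Real.log μ ∈ Set.Icc (0:ℝ) (Real.log 2) :=
      ⟨Real.log_nonneg hμ1, Real.log_le_log hμpos hμ2⟩
    have habs := hM₁ (Real.log x) hs (Real.log μ) hu
    have hexp1 : Real.exp (Real.log x + Real.log μ) = μ * x := by
      rw [Real.exp_add, Real.exp_log hxpos, Real.exp_log hμpos]; ring
    have hexp2 : Real.exp (Real.log x) = x := Real.exp_log hxpos
    have hfx : 0 < f x := hX₀f x hx
    have hfμx : 0 < f (μ * x) := hX₀f _ (hx.trans (le_mul_of_one_le_left hxpos.le hμ1))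
    have hgab : g (Real.log x + Real.log μ) - g (Real.log x) =
        Real.log (f (μ * x)) - Real.log (f x) + α * Real.log μ := by
      simp only [hgdef, hexp1, hexp2]; ring
    rw [hgab] at habs
    rw [abs_le] at habs
    constructor
    · have hle : Real.log (f (μ * x)) ≤ Real.log (f x) + (-α) * Real.log μ + ε * Real.log 2 := by
        linarith [habs.2]
      have := Real.exp_le_exp.mpr hle
      rw [Real.exp_log hfμx] at this
      calc f (μ * x) ≤ Real.exp (Real.log (f x) + (-α) * Real.log μ + ε * Real.log 2) := this
        _ = 2 ^ ε * μ ^ (-α) * f x := by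
            rw [Real.exp_add, Real.exp_add, Real.exp_log hfx]
            rw [Real.rpow_def_of_pos hμpos (-α), Real.rpow_def_of_pos two_pos ε]
            ring_nf
    · have hge : Real.log (f x) + (-α) * Real.log μ + (-ε) * Real.log 2 ≤
          Real.log (f (μ * x)) := by linarith [habs.1]
      have := Real.exp_le_exp.mpr hge
      rw [Real.exp_log hfμx] at this
      calc 2 ^ (-ε) * μ ^ (-α) * f x
          = Real.exp (Real.log (f x) + (-α) * Real.log μ + (-ε) * Real.log 2) := by
            rw [Real.exp_add, Real.exp_add, Real.exp_log hfx]
            rw [Real.rpow_def_of_pos hμpos (-α), Real.rpow_def_of_pos two_pos (-ε)]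
            ring_nf
        _ ≤ f (μ * x) := this
  have h2ε1 : (1:ℝ) ≤ 2 ^ ε := Real.one_le_rpow one_le_two hε.le
  -- upward chaining
  have chain_up : ∀ n : ℕ, ∀ l : ℝ, 1 ≤ l → l ≤ 2 ^ n → ∀ x, X₀ ≤ x →
      f (l * x) ≤ 2 ^ ε * l ^ (ε - α) * f x := by
    intro n
    induction n with
    | zero =>
      intro l hl1 hl2 x hx
      simp only [pow_zero] at hl2
      have hl : l = 1 := le_antisymm hl2 hl1
      subst hl
      rw [one_mul, Real.one_rpow, mul_one]
      exact le_mul_of_one_le_left (hfnn x) h2ε1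
    | succ n ih =>
      intro l hl1 hl2 x hx
      have hlpos : (0:ℝ) < l := lt_of_lt_of_le one_pos hl1
      rcases le_or_gt l (2 ^ n) with hc | hc
      · exact ih l hl1 hc x hx
      rcases le_or_gt l 2 with hc2 | hc2
      · have hstep := (step x hx l hl1 hc2).1
        refine hstep.trans ?_
        have : l ^ (-α) ≤ l ^ (ε - α) :=
          Real.rpow_le_rpow_of_exponent_le hl1 (by linarith)
        have h2 : (0:ℝ) ≤ 2 ^ ε := by positivity
        nlinarith [hfnn x, mul_le_mul_of_nonneg_left this h2]
      · have hl2' : l / 2 ≤ 2 ^ n := by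
          rw [div_le_iff₀ two_pos]
          calc l ≤ 2 ^ (n+1) := hl2
            _ = 2 ^ n * 2 := by ring
        have hl1' : (1:ℝ) ≤ l / 2 := by
          rw [le_div_iff₀ two_pos]; linarith
        have hxl : X₀ ≤ l / 2 * x := by
          calc X₀ ≤ x := hx
            _ ≤ l / 2 * x := le_mul_of_one_le_left (hX₀pos.le.trans hx) hl1'
        have hstep := (step (l / 2 * x) hxl 2 one_le_two le_rfl).1
        have hrec := ih (l / 2) hl1' hl2' x hx
        have heq : (2:ℝ) * (l / 2 * x) = l * x := by ring
        rw [heq] at hstep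
        have hnn : (0:ℝ) ≤ 2 ^ ε * 2 ^ (-α) := by positivity
        have hcomb : f (l * x) ≤ 2 ^ ε * 2 ^ (-α) * (2 ^ ε * (l / 2) ^ (ε - α) * f x) :=
          hstep.trans (mul_le_mul_of_nonneg_left hrec hnn)
        refine hcomb.trans (le_of_eq ?_)
        rw [Real.div_rpow hlpos.le two_pos.le]
        rw [show (2:ℝ) ^ ε * 2 ^ (-α) * (2 ^ ε * (l ^ (ε - α) / 2 ^ (ε - α)) * f x)
          = (2 ^ ε * l ^ (ε - α) * f x) * (2 ^ (-α) * 2 ^ ε / 2 ^ (ε - α)) from by ring]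
        have h2e : (2:ℝ) ^ (-α) * 2 ^ ε / 2 ^ (ε - α) = 1 := by
          rw [← Real.rpow_add two_pos, show -α + ε = ε - α from by ring]
          exact div_self (ne_of_gt (Real.rpow_pos_of_pos two_pos _))
        rw [h2e, mul_one]
  -- downward chaining
  set c₀ : ℝ := 2 ^ (-ε) * 2 ^ (-α) with hc₀def
  have hc₀pos : 0 < c₀ := by positivity
  have hc₀le1 : c₀ ≤ 1 := by
    have h1 : (2:ℝ) ^ (-ε) ≤ 1 := Real.rpow_le_one_of_one_le_of_nonpos one_le_two (by linarith)
    have h2 : (2:ℝ) ^ (-α) ≤ 1 := Real.rpow_le_one_of_one_le_of_nonpos one_le_two (by linarith)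
    calc c₀ = 2 ^ (-ε) * 2 ^ (-α) := rfl
      _ ≤ 1 * 1 := mul_le_mul h1 h2 (by positivity) one_pos.le
      _ = 1 := by ring
  have chain_down : ∀ n : ℕ, ∀ μ : ℝ, 1 ≤ μ → μ ≤ 2 ^ n → ∀ y, X₀ ≤ y →
      c₀ ^ (n+1) * f y ≤ f (μ * y) := by
    intro n
    induction n with
    | zero =>
      intro μ hμ1 hμ2 y hy
      simp only [pow_zero] at hμ2
      have hμ : μ = 1 := le_antisymm hμ2 hμ1
      subst hμ
      rw [one_mul, pow_one]
      nlinarith [hfnn y]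
    | succ n ih =>
      intro μ hμ1 hμ2 y hy
      have hμpos : (0:ℝ) < μ := lt_of_lt_of_le one_pos hμ1
      have hpow_le : c₀ ^ (n+2) ≤ c₀ ^ (n+1) :=
        pow_le_pow_of_le_one hc₀pos.le hc₀le1 (by omega)
      rcases le_or_gt μ (2 ^ n) with hc | hc
      · calc c₀ ^ (n+1+1) * f y ≤ c₀ ^ (n+1) * f y :=
            mul_le_mul_of_nonneg_right hpow_le (hfnn y)
          _ ≤ f (μ * y) := ih μ hμ1 hc y hy
      rcases le_or_gt μ 2 with hc2 | hc2
      · have hstep := (step y hy μ hμ1 hc2).2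
        have hμα : (2:ℝ) ^ (-α) ≤ μ ^ (-α) :=
          Real.rpow_le_rpow_of_nonpos hμpos hc2 (by linarith)
        have h1 : c₀ * f y ≤ 2 ^ (-ε) * μ ^ (-α) * f y := by
          have h2 : (0:ℝ) ≤ (2:ℝ) ^ (-ε) := by positivity
          rw [hc₀def]
          exact mul_le_mul_of_nonneg_right (mul_le_mul_of_nonneg_left hμα h2) (hfnn y)
        have hc₀pow : c₀ ^ (n+1+1) ≤ c₀ := by
          calc c₀ ^ (n+2) ≤ c₀ ^ 1 := pow_le_pow_of_le_one hc₀pos.le hc₀le1 (by omega)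
            _ = c₀ := pow_one c₀
        calc c₀ ^ (n+1+1) * f y ≤ c₀ * f y := mul_le_mul_of_nonneg_right hc₀pow (hfnn y)
          _ ≤ 2 ^ (-ε) * μ ^ (-α) * f y := h1
          _ ≤ f (μ * y) := hstep
      · have hμ2' : μ / 2 ≤ 2 ^ n := by
          rw [div_le_iff₀ two_pos]
          calc μ ≤ 2 ^ (n+1) := hμ2
            _ = 2 ^ n * 2 := by ring
        have hμ1' : (1:ℝ) ≤ μ / 2 := by rw [le_div_iff₀ two_pos]; linarith
        have hyμ : X₀ ≤ μ / 2 * y := by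
          calc X₀ ≤ y := hy
            _ ≤ μ / 2 * y := le_mul_of_one_le_left (hX₀pos.le.trans hy) hμ1'
        have hstep := (step (μ / 2 * y) hyμ 2 one_le_two le_rfl).2
        have heq : (2:ℝ) * (μ / 2 * y) = μ * y := by ring
        rw [heq] at hstep
        have hrec := ih (μ / 2) hμ1' hμ2' y hy
        have h2α : (2:ℝ) ^ ((-α):ℝ) ≤ 2 ^ ((-α):ℝ) := le_rfl
        calc c₀ ^ (n+1+1) * f y = c₀ * (c₀ ^ (n+1) * f y) := by ring
          _ ≤ c₀ * f (μ / 2 * y) := mul_le_mul_of_nonneg_left hrec hc₀pos.le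
          _ = 2 ^ (-ε) * 2 ^ (-α) * f (μ / 2 * y) := by rw [hc₀def]
          _ ≤ f (μ * y) := hstep
  obtain ⟨n₀, hn₀⟩ := pow_unbounded_of_one_lt (δ⁻¹) (one_lt_two (α := ℝ))
  set K : ℝ := max (2 ^ ε) ((c₀ ^ (n₀+1))⁻¹) with hKdef
  have hKpos : 0 < K := lt_of_lt_of_le (by positivity : (0:ℝ) < 2 ^ ε) (le_max_left _ _)
  set M : ℝ := X₀ / min δ 1 with hMdef
  have hminpos : 0 < min δ 1 := lt_min hδ one_pos
  have hmin1 : min δ 1 ≤ 1 := min_le_right _ _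
  have hMX₀ : X₀ ≤ M := by
    rw [hMdef, le_div_iff₀ hminpos]
    calc X₀ * min δ 1 ≤ X₀ * 1 := mul_le_mul_of_nonneg_left hmin1 hX₀pos.le
      _ = X₀ := mul_one X₀
  have hM1 : (1:ℝ) ≤ M := hX₀1.trans hMX₀
  refine ⟨K, M, hKpos, hM1, fun x hx => hX₀f x (hMX₀.trans hx), ?_⟩
  intro x hx l hl
  have hxX₀ : X₀ ≤ x := hMX₀.trans hx
  have hxpos : 0 < x := lt_of_lt_of_le hX₀pos hxX₀
  have hlpos : 0 < l := lt_of_lt_of_le hδ hl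
  rcases le_or_gt 1 l with hl1 | hl1
  · -- l ≥ 1 : upward chain
    obtain ⟨n, hn⟩ := pow_unbounded_of_one_lt l (one_lt_two (α := ℝ))
    have := chain_up n l hl1 hn.le x hxX₀
    refine this.trans ?_
    have hK2 : (2:ℝ) ^ ε ≤ K := le_max_left _ _
    have hrnn : (0:ℝ) ≤ l ^ (ε - α) := Real.rpow_nonneg hlpos.le _
    nlinarith [hfnn x, mul_le_mul_of_nonneg_right hK2 (mul_nonneg hrnn (hfnn x))]
  · -- δ ≤ l < 1 : downward chain applied to y = l * x
    have hyX₀ : X₀ ≤ l * x := by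
      have h1 : min δ 1 ≤ l := (min_le_left δ 1).trans hl
      have hx' : X₀ / min δ 1 ≤ x := hx
      calc X₀ = min δ 1 * (X₀ / min δ 1) := by field_simp
        _ ≤ min δ 1 * x := mul_le_mul_of_nonneg_left hx' hminpos.le
        _ ≤ l * x := mul_le_mul_of_nonneg_right h1 hxpos.le
    have hμ1 : (1:ℝ) ≤ l⁻¹ := (one_le_inv₀ hlpos).mpr hl1.le
    have hμn₀ : l⁻¹ ≤ 2 ^ n₀ := le_of_lt (lt_of_le_of_lt (inv_anti₀ hδ hl) hn₀)
    have hcd := chain_down n₀ l⁻¹ hμ1 hμn₀ (l * x) hyX₀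
    rw [inv_mul_cancel_left₀ (ne_of_gt hlpos)] at hcd
    have hcpowpos : 0 < c₀ ^ (n₀+1) := pow_pos hc₀pos _
    have hfy : f (l * x) ≤ (c₀ ^ (n₀+1))⁻¹ * f x := by
      rw [← div_eq_inv_mul, le_div_iff₀ hcpowpos]
      linarith [hcd]
    have hone : (1:ℝ) ≤ l ^ (ε - α) :=
      Real.one_le_rpow_of_pos_of_le_one_of_nonpos hlpos hl1.le (by linarith)
    have hKc : (c₀ ^ (n₀+1))⁻¹ ≤ K := le_max_right _ _
    calc f (l * x) ≤ (c₀ ^ (n₀+1))⁻¹ * f x := hfy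
      _ ≤ K * (l ^ (ε - α) * f x) :=
          mul_le_mul hKc (le_mul_of_one_le_left (hfnn x) hone) (hfnn x)
            (le_trans (by positivity) hKc)
      _ = K * l ^ (ε - α) * f x := by ring


private lemma measurable_rpow_const' (e : ℝ) : Measurable fun r : ℝ => r ^ e := by measurability

end AuxLemmas

/-- the uniform tail bound (via Potter's bounds) used for consistency. -/
theorem layered_tail_bound
    (d k : ℕ) (hd : 1 ≤ d) (hk : 1 ≤ k) (α : ℝ) (hα : (d : ℝ) < α)
    (f : ℝ → ℝ) (hfm : Measurable f) (hfnn : ∀ r, 0 ≤ f r)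
    (hfprob : (∫ x : Euc d, f ‖x‖) = 1)
    (hfpos : ∀ᶠ r in atTop, 0 < f r)
    (hfreg : ∀ r : ℝ, 0 < r → Tendsto (fun t => f (t * r) / f t) atTop (𝓝 (r ^ (-α))))
    (h : (Fin k → Euc d) → ℝ) (hhm : Measurable h)
    (hh01 : ∀ y, h y = 0 ∨ h y = 1)
    (hhperm : ∀ (σ : Equiv.Perm (Fin k)) (y : Fin k → Euc d), h (y ∘ σ) = h y)
    (hhtrans : ∀ (x : Euc d) (y : Fin k → Euc d), h (fun i => x + y i) = h y)
    (L : ℝ) (hL : 0 < L)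
    (hhdiam : ∀ y : Fin k → Euc d, (∃ i j, L < dist (y i) (y j)) → h y = 0)
    (hh1 : k = 1 → ∀ y, h y = 1) :
    ∀ δ : ℝ, 0 < δ → ∀ ε : ℝ, 0 < ε → ε < α - d →
      ∃ C : ℝ, 0 < C ∧ ∃ R₀ : ℝ, 0 < R₀ ∧ ∀ R : ℝ, R₀ ≤ R → ∀ t : ℝ, δ ≤ t →
        (R ^ d * f R ^ k)⁻¹ *
            (∫ y in {y : Fin k → Euc d | ∀ i, t * R ≤ ‖y i‖}, h y * ∏ i, f ‖y i‖) ≤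
          C * t ^ ((d : ℝ) - α + ε) := by
  obtain ⟨m, rfl⟩ : ∃ m, k = m + 1 := ⟨k - 1, (Nat.succ_pred_eq_of_pos hk).symm⟩
  intro δ hδ ε hε hεα
  have hdnn : (0:ℝ) ≤ (d:ℝ) := Nat.cast_nonneg d
  have hα0 : 0 < α := lt_of_le_of_lt hdnn hα
  have hεα' : ε < α := by linarith
  obtain ⟨K, M, hK, hM1, hfposM, hP⟩ :=
    potter_aux f hfm hfnn hfpos α hα0 hfreg δ ε hδ hε hεα'
  -- the radial comparison function and its integral
  set e : ℝ := ε - α with hedef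
  have he0 : e ≤ 0 := by rw [hedef]; linarith
  set ψ : Euc d → ℝ := Set.indicator {x : Euc d | 1 ≤ ‖x‖} (fun x => ‖x‖ ^ e) with hψdef
  have hψnn : ∀ x, 0 ≤ ψ x := by
    intro x
    rw [hψdef]
    by_cases hx : x ∈ {x : Euc d | 1 ≤ ‖x‖}
    · rw [Set.indicator_of_mem hx]; positivity
    · rw [Set.indicator_of_notMem hx]
  have hψmeas : Measurable ψ := by
    apply Measurable.indicator
    · exact (measurable_rpow_const' e).comp measurable_norm
    · exact measurableSet_le measurable_const measurable_norm
  have hfinrank : finrank ℝ (Euc d) = d := finrank_euclideanSpace_fin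
  have hψint : Integrable ψ := by
    have hd_lt : (finrank ℝ (Euc d) : ℝ) < α - ε := by rw [hfinrank]; linarith
    have hint1 : Integrable (fun x : Euc d => (1 + ‖x‖) ^ (-(α - ε))) :=
      integrable_one_add_norm hd_lt
    refine (hint1.const_mul ((2:ℝ) ^ (α - ε))).mono' hψmeas.aestronglyMeasurable ?_
    refine ae_of_all _ fun x => ?_
    rw [Real.norm_eq_abs, abs_of_nonneg (hψnn x)]
    by_cases hx : x ∈ {x : Euc d | 1 ≤ ‖x‖}
    · rw [hψdef, Set.indicator_of_mem hx]
      have hx1 : (1:ℝ) ≤ ‖x‖ := hx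
      have hxpos : (0:ℝ) < ‖x‖ := lt_of_lt_of_le one_pos hx1
      have h2x : 1 + ‖x‖ ≤ 2 * ‖x‖ := by linarith
      have hstep : (2 * ‖x‖) ^ (-(α - ε)) ≤ (1 + ‖x‖) ^ (-(α - ε)) :=
        Real.rpow_le_rpow_of_nonpos (by linarith) h2x (by linarith)
      have hmul : (2 * ‖x‖ : ℝ) ^ (-(α - ε)) = 2 ^ (-(α - ε)) * ‖x‖ ^ (-(α - ε)) :=
        Real.mul_rpow two_pos.le (norm_nonneg x)
      have h2cancel : (2:ℝ) ^ (α - ε) * 2 ^ (-(α - ε)) = 1 := by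
        rw [← Real.rpow_add two_pos]; simp
      have hee : ‖x‖ ^ e = ‖x‖ ^ (-(α - ε)) := by rw [hedef]; ring_nf
      rw [hee]
      calc ‖x‖ ^ (-(α - ε)) = (2 ^ (α - ε) * 2 ^ (-(α - ε))) * ‖x‖ ^ (-(α - ε)) := by
            rw [h2cancel, one_mul]
        _ = 2 ^ (α - ε) * (2 * ‖x‖) ^ (-(α - ε)) := by rw [hmul]; ring
        _ ≤ 2 ^ (α - ε) * (1 + ‖x‖) ^ (-(α - ε)) :=
            mul_le_mul_of_nonneg_left hstep (by positivity)
    · rw [hψdef, Set.indicator_of_notMem hx]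
      positivity
  set J : ℝ := ∫ x : Euc d, ψ x with hJdef
  have hJnn : 0 ≤ J := integral_nonneg hψnn
  -- the claimed constant
  set Vb : ℝ≥0∞ := volume (Metric.closedBall (0 : Euc d) L) with hVbdef
  have hVbne : Vb ≠ ⊤ := (measure_closedBall_lt_top).ne
  set V : ℝ := Vb.toReal with hVdef
  have hVnn : 0 ≤ V := ENNReal.toReal_nonneg
  set C : ℝ := K ^ (m+1) * (δ ^ e) ^ m * V ^ m * J + 1 with hCdef
  have hCoeffnn : 0 ≤ K ^ (m+1) * (δ ^ e) ^ m * V ^ m * J := by positivity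
  refine ⟨C, by positivity, M, by linarith, ?_⟩
  intro R hR t ht
  have hRM : M ≤ R := hR
  have hR1 : (1:ℝ) ≤ R := hM1.trans hR
  have hRpos : (0:ℝ) < R := lt_of_lt_of_le one_pos hR1
  have htpos : (0:ℝ) < t := lt_of_lt_of_le hδ ht
  have htR : (0:ℝ) < t * R := mul_pos htpos hRpos
  have hfR : 0 < f R := hfposM R hRM
  -- pointwise Potter bounds at scale R
  have hratio : ∀ z : ℝ, t * R ≤ z → δ ≤ z / R := by
    intro z hz
    rw [le_div_iff₀ hRpos]
    calc δ * R ≤ t * R := mul_le_mul_of_nonneg_right ht hRpos.le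
      _ ≤ z := hz
  have hPot : ∀ z : ℝ, t * R ≤ z → f z ≤ K * (z / R) ^ e * f R := by
    intro z hz
    have := hP R hRM (z / R) (hratio z hz)
    rwa [div_mul_cancel₀ z (ne_of_gt hRpos)] at this
  have hPotδ : ∀ z : ℝ, t * R ≤ z → f z ≤ K * δ ^ e * f R := by
    intro z hz
    refine (hPot z hz).trans ?_
    have h2 : (z / R) ^ e ≤ δ ^ e := Real.rpow_le_rpow_of_nonpos hδ (hratio z hz) he0
    have : K * (z / R) ^ e ≤ K * δ ^ e := mul_le_mul_of_nonneg_left h2 hK.le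
    exact mul_le_mul_of_nonneg_right this (hfnn R)
  -- the main set and comparison functions
  set S : Set (Fin (m+1) → Euc d) := {y | ∀ i, t * R ≤ ‖y i‖} with hSdef
  have hSmeas : MeasurableSet S := by
    have hS' : S = ⋂ i, {y : Fin (m+1) → Euc d | t * R ≤ ‖y i‖} := by
      ext y; simp [hSdef, Set.mem_iInter]
    rw [hS']
    exact MeasurableSet.iInter fun i =>
      measurableSet_le measurable_const (measurable_norm.comp (measurable_pi_apply i))
  set c : ℝ := K ^ (m+1) * f R ^ (m+1) * (δ ^ e) ^ m with hcdef
  have hcnn : 0 ≤ c := by positivity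
  set Φ : Euc d → ℝ≥0∞ := fun x =>
    Set.indicator {x : Euc d | t * R ≤ ‖x‖} (fun x => ENNReal.ofReal ((‖x‖ / R) ^ e)) x with hΦdef
  set Ψ : Euc d → Euc d → ℝ≥0∞ := fun x v => if dist v x ≤ L then 1 else 0 with hΨdef
  set D : (Fin (m+1) → Euc d) → ℝ≥0∞ := fun y =>
    ENNReal.ofReal c * (Φ (y 0) * ∏ j : Fin m, Ψ (y 0) (y (Fin.succ j))) with hDdef
  have hΦmeas : Measurable Φ := by
    apply Measurable.indicator
    · exact ENNReal.measurable_ofReal.comp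
        ((measurable_rpow_const' e).comp (measurable_norm.div_const R))
    · exact measurableSet_le measurable_const measurable_norm
  have hΦne : ∀ x, Φ x ≠ ⊤ := by
    intro x
    simp only [hΦdef]
    by_cases hx : x ∈ {x : Euc d | t * R ≤ ‖x‖}
    · rw [Set.indicator_of_mem hx]; exact ENNReal.ofReal_ne_top
    · rw [Set.indicator_of_notMem hx]; exact ENNReal.zero_ne_top
  -- integrand facts
  have hprodmeas : Measurable (fun y : Fin (m+1) → Euc d => ∏ i, f ‖y i‖) :=
    Finset.measurable_prod _ fun i _ => hfm.comp (measurable_norm.comp (measurable_pi_apply i))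
  have hintmeas : Measurable (fun y : Fin (m+1) → Euc d => h y * ∏ i, f ‖y i‖) :=
    hhm.mul hprodmeas
  have hnn : ∀ y, 0 ≤ h y * ∏ i, f ‖y i‖ := by
    intro y
    have h0 : 0 ≤ h y := by rcases hh01 y with h' | h' <;> rw [h'] <;> norm_num
    exact mul_nonneg h0 (Finset.prod_nonneg fun i _ => hfnn _)
  have hIeq : (∫ y in S, h y * ∏ i, f ‖y i‖) =
      (∫⁻ y in S, ENNReal.ofReal (h y * ∏ i, f ‖y i‖)).toReal :=
    integral_eq_lintegral_of_nonneg_ae (ae_of_all _ hnn) hintmeas.aestronglyMeasurable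
  -- pointwise domination
  have hpt : ∀ y, S.indicator (fun y => ENNReal.ofReal (h y * ∏ i, f ‖y i‖)) y ≤ D y := by
    intro y
    by_cases hyS : y ∈ S
    · rw [Set.indicator_of_mem hyS]
      rcases hh01 y with hy0 | hy1
      · rw [hy0, zero_mul, ENNReal.ofReal_zero]; exact zero_le
      · have hdiam : ∀ i j, dist (y i) (y j) ≤ L := by
          by_contra hcon
          push_neg at hcon
          obtain ⟨i, j, hij⟩ := hcon
          have := hhdiam y ⟨i, j, hij⟩
          rw [hy1] at this
          exact one_ne_zero this
        have hΨ1 : ∀ j : Fin m, Ψ (y 0) (y (Fin.succ j)) = 1 := fun j => if_pos (hdiam _ _)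
        have hΦval : Φ (y 0) = ENNReal.ofReal ((‖y 0‖ / R) ^ e) := by
          simp only [hΦdef]
          exact Set.indicator_of_mem (show y 0 ∈ {x : Euc d | t * R ≤ ‖x‖} from hyS 0) _
        have hreal : h y * ∏ i, f ‖y i‖ ≤ c * ((‖y 0‖ / R) ^ e) := by
          rw [hy1, one_mul, Fin.prod_univ_succ]
          have hb0 : f ‖y 0‖ ≤ K * (‖y 0‖ / R) ^ e * f R := hPot _ (hyS 0)
          have hprod : (∏ j : Fin m, f ‖y (Fin.succ j)‖) ≤ (K * δ ^ e * f R) ^ m := by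
            calc (∏ j : Fin m, f ‖y (Fin.succ j)‖) ≤ ∏ _j : Fin m, (K * δ ^ e * f R) :=
                Finset.prod_le_prod (fun j _ => hfnn _) (fun j _ => hPotδ _ (hyS _))
              _ = (K * δ ^ e * f R) ^ m := by
                  rw [Finset.prod_const, Finset.card_univ, Fintype.card_fin]
          calc f ‖y 0‖ * ∏ j : Fin m, f ‖y (Fin.succ j)‖
              ≤ (K * (‖y 0‖ / R) ^ e * f R) * (K * δ ^ e * f R) ^ m :=
                mul_le_mul hb0 hprod (Finset.prod_nonneg fun j _ => hfnn _) (by positivity)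
            _ = c * ((‖y 0‖ / R) ^ e) := by rw [hcdef, mul_pow, mul_pow]; ring
        calc ENNReal.ofReal (h y * ∏ i, f ‖y i‖) ≤ ENNReal.ofReal (c * ((‖y 0‖ / R) ^ e)) :=
            ENNReal.ofReal_le_ofReal hreal
          _ = D y := by
              rw [hDdef]
              simp only [hΦval, hΨ1, Finset.prod_const_one, mul_one]
              rw [ENNReal.ofReal_mul hcnn]
    · rw [Set.indicator_of_notMem hyS]; exact zero_le
  -- Fubini computation of ∫⁻ D
  set G : Euc d × (Fin m → Euc d) → ℝ≥0∞ := fun p => Φ p.1 * ∏ j : Fin m, Ψ p.1 (p.2 j)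
    with hGdef
  have hΨpmeas : ∀ j : Fin m, Measurable (fun p : Euc d × (Fin m → Euc d) => Ψ p.1 (p.2 j)) := by
    intro j
    apply Measurable.ite _ measurable_const measurable_const
    exact measurableSet_le
      (((measurable_pi_apply j).comp measurable_snd).dist measurable_fst) measurable_const
  have hGmeas : Measurable G :=
    (hΦmeas.comp measurable_fst).mul (Finset.measurable_prod _ fun j _ => hΨpmeas j)
  have hmp := volume_preserving_piFinSuccAbove (fun _ : Fin (m+1) => Euc d) 0
  have hstep1 : (∫⁻ y : Fin (m+1) → Euc d, Φ (y 0) * ∏ j : Fin m, Ψ (y 0) (y (Fin.succ j)))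
      = ∫⁻ p : Euc d × (Fin m → Euc d), G p := by
    rw [← hmp.lintegral_comp hGmeas]
    rfl
  have hinner : ∀ x : Euc d, (∫⁻ z : Fin m → Euc d, ∏ j : Fin m, Ψ x (z j)) = Vb ^ m := by
    intro x
    have hind : (fun z : Fin m → Euc d => ∏ j : Fin m, Ψ x (z j)) =
        Set.indicator (Set.univ.pi fun _ : Fin m => Metric.closedBall x L) 1 := by
      funext z
      by_cases hz : ∀ j : Fin m, z j ∈ Metric.closedBall x L
      · rw [Set.indicator_of_mem (Set.mem_univ_pi.mpr hz)]
        have h1 : ∀ j : Fin m, Ψ x (z j) = 1 := fun j => if_pos (hz j)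
        simp [h1]
      · push_neg at hz
        obtain ⟨j, hj⟩ := hz
        rw [Set.indicator_of_notMem (by rw [Set.mem_univ_pi]; push_neg; exact ⟨j, hj⟩)]
        refine Finset.prod_eq_zero (Finset.mem_univ j) ?_
        rw [hΨdef]
        exact if_neg (by simpa [Metric.mem_closedBall] using hj)
    rw [hind, lintegral_indicator_one (MeasurableSet.univ_pi fun _ => measurableSet_closedBall),
      volume_pi_pi]
    simp [Measure.addHaar_closedBall_center, ← hVbdef, Finset.prod_const, Finset.card_univ]
  -- the scaling identity for the radial integral
  set φ : Euc d → ℝ := fun x => t ^ e * ψ ((t*R)⁻¹ • x) with hφdef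
  have hφnn : ∀ x, 0 ≤ φ x := fun x => mul_nonneg (Real.rpow_nonneg htpos.le _) (hψnn _)
  have hφint : Integrable φ :=
    (hψint.comp_smul (inv_ne_zero (ne_of_gt htR))).const_mul _
  have hφval : (∫ x : Euc d, φ x) = J * R ^ d * t ^ ((d:ℝ) + e) := by
    rw [hφdef]
    have hcs := Measure.integral_comp_inv_smul (volume : Measure (Euc d)) ψ (t*R)
    rw [integral_const_mul, hcs, hfinrank, abs_of_pos (pow_pos htR d), smul_eq_mul,
      ← hJdef, mul_pow, Real.rpow_add htpos, Real.rpow_natCast]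
    ring
  have hΦofReal : ∀ x : Euc d, Φ x = ENNReal.ofReal (φ x) := by
    intro x
    have hnorm : ‖(t*R)⁻¹ • x‖ = ‖x‖ / (t*R) := by
      rw [norm_smul, Real.norm_eq_abs, abs_of_pos (inv_pos.mpr htR)]
      rw [inv_mul_eq_div]
    by_cases hx : x ∈ {x : Euc d | t * R ≤ ‖x‖}
    · have hmem : (t*R)⁻¹ • x ∈ {x : Euc d | 1 ≤ ‖x‖} := by
        rw [Set.mem_setOf_eq, hnorm, le_div_iff₀ htR, one_mul]
        exact hx
      simp only [hΦdef, hφdef, hψdef]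
      rw [Set.indicator_of_mem hx, Set.indicator_of_mem hmem, hnorm]
      congr 1
      have hdd : ‖x‖ / (t * R) = (‖x‖ / R) / t := by
        rw [div_div]
        ring_nf
      rw [hdd, Real.div_rpow (by positivity) htpos.le]
      rw [mul_div_cancel₀ _ (ne_of_gt (Real.rpow_pos_of_pos htpos e))]
    · have hmem : (t*R)⁻¹ • x ∉ {x : Euc d | 1 ≤ ‖x‖} := by
        rw [Set.mem_setOf_eq, hnorm, le_div_iff₀ htR, one_mul]
        exact hx
      simp only [hΦdef, hφdef, hψdef]
      rw [Set.indicator_of_notMem hx, Set.indicator_of_notMem hmem, mul_zero]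
      exact ENNReal.ofReal_zero.symm
  have hΦlint : (∫⁻ x : Euc d, Φ x) = ENNReal.ofReal (J * R ^ d * t ^ ((d:ℝ) + e)) := by
    calc (∫⁻ x : Euc d, Φ x) = ∫⁻ x : Euc d, ENNReal.ofReal (φ x) := by
          simp_rw [hΦofReal]
      _ = ENNReal.ofReal (∫ x : Euc d, φ x) :=
          (ofReal_integral_eq_lintegral_ofReal hφint (ae_of_all _ hφnn)).symm
      _ = ENNReal.ofReal (J * R ^ d * t ^ ((d:ℝ) + e)) := by rw [hφval]
  have hD : (∫⁻ y : Fin (m+1) → Euc d, D y) =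
      ENNReal.ofReal c * (Vb ^ m * ENNReal.ofReal (J * R ^ d * t ^ ((d:ℝ) + e))) := by
    rw [hDdef]
    rw [lintegral_const_mul' _ _ ENNReal.ofReal_ne_top]
    congr 1
    rw [hstep1, Measure.volume_eq_prod, lintegral_prod _ hGmeas.aemeasurable]
    have hGin : ∀ x : Euc d, (∫⁻ z : Fin m → Euc d, G (x, z)) = Φ x * Vb ^ m := by
      intro x
      rw [hGdef]
      simp only
      rw [lintegral_const_mul' _ _ (hΦne x), hinner x]
    simp_rw [hGin]
    rw [lintegral_mul_const' _ _ (ENNReal.pow_ne_top hVbne), hΦlint, mul_comm]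
  -- assemble the bound
  have hbig : (∫⁻ y in S, ENNReal.ofReal (h y * ∏ i, f ‖y i‖)) ≤
      ENNReal.ofReal c * (Vb ^ m * ENNReal.ofReal (J * R ^ d * t ^ ((d:ℝ) + e))) := by
    rw [← hD, ← lintegral_indicator hSmeas]
    exact lintegral_mono hpt
  have hRHSnn : 0 ≤ J * R ^ d * t ^ ((d:ℝ) + e) :=
    mul_nonneg (mul_nonneg hJnn (pow_nonneg hRpos.le d)) (Real.rpow_nonneg htpos.le _)
  have hRHSne : ENNReal.ofReal c * (Vb ^ m * ENNReal.ofReal (J * R ^ d * t ^ ((d:ℝ) + e))) ≠ ⊤ :=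
    ENNReal.mul_ne_top ENNReal.ofReal_ne_top
      (ENNReal.mul_ne_top (ENNReal.pow_ne_top hVbne) ENNReal.ofReal_ne_top)
  have hItoReal : (∫ y in S, h y * ∏ i, f ‖y i‖) ≤
      c * (V ^ m * (J * R ^ d * t ^ ((d:ℝ) + e))) := by
    rw [hIeq]
    refine le_trans (ENNReal.toReal_mono hRHSne hbig) ?_
    rw [ENNReal.toReal_mul, ENNReal.toReal_mul, ENNReal.toReal_ofReal hcnn,
      ENNReal.toReal_ofReal hRHSnn, ENNReal.toReal_pow, ← hVdef]
  have hpos : 0 < R ^ d * f R ^ (m+1) := mul_pos (pow_pos hRpos d) (pow_pos hfR (m+1))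
  have hexp : (d:ℝ) + e = (d:ℝ) - α + ε := by rw [hedef]; ring
  calc (R ^ d * f R ^ (m+1))⁻¹ * (∫ y in S, h y * ∏ i, f ‖y i‖)
      ≤ (R ^ d * f R ^ (m+1))⁻¹ * (c * (V ^ m * (J * R ^ d * t ^ ((d:ℝ) + e)))) :=
        mul_le_mul_of_nonneg_left hItoReal (inv_nonneg.mpr hpos.le)
    _ = (K ^ (m+1) * (δ ^ e) ^ m * V ^ m * J) * t ^ ((d:ℝ) + e) := by
        rw [show c * (V ^ m * (J * R ^ d * t ^ ((d:ℝ) + e))) =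
            (R ^ d * f R ^ (m+1)) * ((K ^ (m+1) * (δ ^ e) ^ m * V ^ m * J) * t ^ ((d:ℝ) + e))
          from by rw [hcdef]; ring]
        rw [inv_mul_cancel_left₀ (ne_of_gt hpos)]
    _ ≤ C * t ^ ((d:ℝ) - α + ε) := by
        rw [← hexp]
        apply mul_le_mul_of_nonneg_right _ (Real.rpow_nonneg htpos.le _)
        rw [hCdef]
        linarith
end
end

section
/- For every ℓ with 1 ≤ ℓ ≤ k, every δ > 0, and every ε ∈ (0, α−d) there exist a constant C > 0 and R_0 > 0 such that for all R ≥ R_0 and all t ≥ δ, (R^d f(R)^{2k−ℓ})^{−1} ∫_{(ℝ^d)^{2k−ℓ}} 1{ min_{1≤i≤2k−ℓ} |y_i| ≥ t R } h_k(y_1,…,y_k) h_k(y_1,…,y_ℓ,y_{k+1},…,y_{2k−ℓ}) Π_{i=1}^{2k−ℓ} f(y_i) dy ≤ C · t^{d−(2k−ℓ)(α−ε)}. -/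
open MeasureTheory Filter Topology

noncomputable section

open scoped ENNReal

lemma min_one_add_le {a b : ℝ} (ha : 0 ≤ a) (hb : 0 ≤ b) :
    min (a + b) 1 ≤ min a 1 + min b 1 := by
  rcases le_total (a + b) 1 with h | h
  · rw [min_eq_left h, min_eq_left (by linarith), min_eq_left (by linarith)]
  · rw [min_eq_right h]
    rcases le_total a 1 with h1 | h1
    · rcases le_total b 1 with h2 | h2
      · rw [min_eq_left h1, min_eq_left h2]; linarith
      · rw [min_eq_right h2]; have : (0:ℝ) ≤ min a 1 := le_min ha zero_le_one; linarith
    · rw [min_eq_right h1]; have : (0:ℝ) ≤ min b 1 := le_min hb zero_le_one; linarith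


lemma unif_bound (f : ℝ → ℝ) (α : ℝ) (hfm : Measurable f)
    (hfpos : ∀ᶠ r in atTop, 0 < f r)
    (hfreg : ∀ r : ℝ, 0 < r → Tendsto (fun t => f (t * r) / f t) atTop (𝓝 (r ^ (-α))))
    {η : ℝ} (hη : 0 < η) (hη1 : η < 1) :
    ∃ X : ℝ, (∀ r : ℝ, Real.exp X ≤ r → 0 < f r) ∧
      ∀ x, X ≤ x → ∀ w ∈ Set.Icc (0:ℝ) 1,
        |Real.log (f (Real.exp (x + w))) - Real.log (f (Real.exp x)) + α * w| ≤ η := by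
  obtain ⟨r₀, hr₀⟩ := eventually_atTop.mp hfpos
  set x₀ : ℝ := |r₀| with hx₀
  have hexp₀ : ∀ x, x₀ ≤ x → r₀ ≤ Real.exp x := by
    intro x hx
    calc r₀ ≤ |r₀| := le_abs_self _
    _ ≤ x := hx
    _ ≤ Real.exp x := (Real.add_one_le_exp x).trans' (by linarith)
  set H : ℝ → ℝ → ℝ := fun x u =>
    Real.log (f (Real.exp (x + u))) - Real.log (f (Real.exp x)) + α * u with hH
  have hkey : ∀ x w v : ℝ, H x w = H x (w + v) - H (x + w) v := by
    intro x w v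
    simp only [hH]
    rw [show x + (w + v) = x + w + v by ring]
    ring
  have hpt : ∀ u : ℝ, 0 ≤ u → Tendsto (fun x => H x u) atTop (𝓝 0) := by
    intro u hu
    have h1 : Tendsto (fun x : ℝ => f (Real.exp x * Real.exp u) / f (Real.exp x)) atTop
        (𝓝 ((Real.exp u) ^ (-α))) := (hfreg _ (Real.exp_pos u)).comp Real.tendsto_exp_atTop
    have h2 := h1.log (ne_of_gt (Real.rpow_pos_of_pos (Real.exp_pos u) _))
    have hlim : Real.log (Real.exp u ^ (-α)) = -(α * u) := by
      rw [Real.log_rpow (Real.exp_pos u), Real.log_exp]; ring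
    have heq : (fun x : ℝ => Real.log (f (Real.exp x * Real.exp u) / f (Real.exp x))) =ᶠ[atTop]
        (fun x : ℝ => Real.log (f (Real.exp (x + u))) - Real.log (f (Real.exp x))) := by
      filter_upwards [eventually_ge_atTop x₀] with x hx
      have p1 : 0 < f (Real.exp x) := hr₀ _ (hexp₀ x hx)
      have p2 : 0 < f (Real.exp (x + u)) := hr₀ _ (hexp₀ _ (by linarith))
      rw [← Real.exp_add] at *
      rw [Real.log_div (ne_of_gt p2) (ne_of_gt p1)]
    have h3 := h2.congr' heq
    rw [hlim] at h3
    have := h3.add_const (α * u)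
    simpa using this
  set Φ : ℝ → ℝ → ℝ := fun x u => min |H x u| 1 with hΦ
  have hΦnn : ∀ x u, 0 ≤ Φ x u := fun x u => le_min (abs_nonneg _) zero_le_one
  have hΦle : ∀ x u, Φ x u ≤ 1 := fun x u => min_le_right _ _
  have hΦm : ∀ x, Measurable (Φ x) := by
    intro x
    apply Measurable.min _ measurable_const
    apply Measurable.abs
    apply Measurable.add
    · apply Measurable.sub _ measurable_const
      exact (Real.measurable_log.comp (hfm.comp
        (Real.continuous_exp.measurable.comp (measurable_const.add measurable_id))))
    · exact measurable_const.mul measurable_id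
  set μ2 := volume.restrict (Set.Icc (0:ℝ) 2) with hμ2
  haveI : IsFiniteMeasure μ2 := by
    constructor
    rw [hμ2, Measure.restrict_apply_univ, Real.volume_Icc]
    exact ENNReal.ofReal_lt_top
  have hΦint : ∀ g : ℝ → ℝ, Measurable g → (∀ u, 0 ≤ g u) → (∀ u, g u ≤ 1) →
      ∀ (μ : Measure ℝ) [IsFiniteMeasure μ], Integrable g μ := by
    intro g hm h0 h1 μ _
    refine (integrable_const (1:ℝ)).mono' hm.aestronglyMeasurable ?_
    filter_upwards with u
    rw [Real.norm_eq_abs, abs_of_nonneg (h0 u)]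
    exact h1 u
  have hDCT : Tendsto (fun x => ∫ u, Φ x u ∂μ2) atTop (𝓝 0) := by
    have h0 : (0:ℝ) = ∫ (_ : ℝ), (0:ℝ) ∂μ2 := by simp
    rw [h0]
    apply tendsto_integral_filter_of_dominated_convergence (fun _ => (1:ℝ))
    · exact Eventually.of_forall fun x => (hΦm x).aestronglyMeasurable
    · exact Eventually.of_forall fun x => Eventually.of_forall fun u => by
        rw [Real.norm_eq_abs, abs_of_nonneg (hΦnn x u)]; exact hΦle x u
    · exact integrable_const 1
    · filter_upwards [ae_restrict_mem measurableSet_Icc] with u hu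
      have : Tendsto (fun x => |H x u|) atTop (𝓝 |0|) := (hpt u hu.1).abs
      have := this.min (tendsto_const_nhds (x := (1:ℝ)))
      simpa using this
  obtain ⟨X', hX'⟩ := eventually_atTop.mp (hDCT.eventually_le_const (by linarith : (0:ℝ) < η/2))
  refine ⟨max X' x₀, fun r hr => hr₀ r ((hexp₀ _ (le_max_right _ _)).trans hr), ?_⟩
  intro x hx w hw
  have hxx₀ : x₀ ≤ x := le_trans (le_max_right _ _) hx
  have hxX' : X' ≤ x := le_trans (le_max_left _ _) hx
  set μ1 := volume.restrict (Set.Icc (0:ℝ) 1) with hμ1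
  haveI : IsFiniteMeasure μ1 := by
    constructor
    rw [hμ1, Measure.restrict_apply_univ, Real.volume_Icc]
    exact ENNReal.ofReal_lt_top
  -- main chain
  have hmono_meas : μ1 ≤ μ2 := Measure.restrict_mono (Set.Icc_subset_Icc_right one_le_two) le_rfl
  have hint2 : ∀ y, Integrable (Φ y) μ2 := fun y => hΦint _ (hΦm y) (hΦnn y) (hΦle y) μ2
  have hint1b : Integrable (Φ (x + w)) μ1 := hΦint _ (hΦm _) (hΦnn _) (hΦle _) μ1
  have hint1a : Integrable (fun v => Φ x (w + v)) μ1 := by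
    refine hΦint _ ?_ (fun v => hΦnn _ _) (fun v => hΦle _ _) μ1
    exact (hΦm x).comp (measurable_const.add measurable_id)
  have step1 : min |H x w| 1 ≤ (∫ v, Φ x (w + v) ∂μ1) + ∫ v, Φ (x + w) v ∂μ1 := by
    have hconst : min |H x w| 1 = ∫ (_ : ℝ), min |H x w| 1 ∂μ1 := by
      rw [integral_const]
      rw [hμ1, Measure.real, Measure.restrict_apply_univ, Real.volume_Icc]
      norm_num
    rw [hconst, ← integral_add hint1a hint1b]
    apply integral_mono (integrable_const _) (hint1a.add hint1b)
    intro v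
    have h1 : |H x w| ≤ |H x (w + v)| + |H (x + w) v| := by
      rw [hkey x w v]; exact (abs_sub _ _).trans_eq rfl
    calc min |H x w| 1 ≤ min (|H x (w + v)| + |H (x + w) v|) 1 :=
          min_le_min h1 le_rfl
      _ ≤ Φ x (w + v) + Φ (x + w) v := min_one_add_le (abs_nonneg _) (abs_nonneg _)
  have step2 : (∫ v, Φ (x + w) v ∂μ1) ≤ η / 2 := by
    calc (∫ v, Φ (x + w) v ∂μ1) ≤ ∫ v, Φ (x + w) v ∂μ2 :=
          integral_mono_measure hmono_meas (Eventually.of_forall (hΦnn _)) (hint2 _)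
      _ ≤ η / 2 := hX' _ (by linarith [hw.1])
  have step3 : (∫ v, Φ x (w + v) ∂μ1) ≤ η / 2 := by
    have htrans : (∫ v, Φ x (w + v) ∂μ1) = ∫ u in Set.Icc w (w + 1), Φ x u := by
      rw [hμ1, ← integral_indicator measurableSet_Icc, ← integral_indicator measurableSet_Icc]
      have : ∀ v : ℝ, (Set.Icc (0:ℝ) 1).indicator (fun v => Φ x (w + v)) v =
          (Set.Icc w (w+1)).indicator (Φ x) (w + v) := by
        intro v
        by_cases hv : v ∈ Set.Icc (0:ℝ) 1
        · rw [Set.indicator_of_mem hv, Set.indicator_of_mem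
            (by constructor <;> [linarith [hv.1]; linarith [hv.2]])]
        · rw [Set.indicator_of_notMem hv, Set.indicator_of_notMem]
          intro hc
          exact hv ⟨by linarith [hc.1], by linarith [hc.2]⟩
      simp_rw [this]
      exact integral_add_left_eq_self _ w
    rw [htrans]
    calc (∫ u in Set.Icc w (w + 1), Φ x u) ≤ ∫ u in Set.Icc 0 2, Φ x u := by
          apply setIntegral_mono_set (hint2 x)
          · exact Eventually.of_forall (hΦnn x)
          · apply HasSubset.Subset.eventuallyLE
            exact Set.Icc_subset_Icc (hw.1) (by linarith [hw.2])
      _ ≤ η / 2 := hX' _ hxX'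
  have : min |H x w| 1 ≤ η := by linarith
  by_contra hc
  push_neg at hc
  have : η < min |H x w| 1 := lt_min hc hη1
  linarith

lemma potter (f : ℝ → ℝ) (α : ℝ) (hfm : Measurable f)
    (hfpos : ∀ᶠ r in atTop, 0 < f r)
    (hfreg : ∀ r : ℝ, 0 < r → Tendsto (fun t => f (t * r) / f t) atTop (𝓝 (r ^ (-α))))
    {β : ℝ} (hβ : 0 < β) (hβα : β < α) :
    ∃ S : ℝ, 1 ≤ S ∧ (∀ s, S ≤ s → 0 < f s) ∧
      (∀ s, S ≤ s → ∀ lam, 1 ≤ lam → f (lam * s) ≤ Real.exp 1 * lam ^ (-β) * f s) ∧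
      (∀ s, S ≤ s → ∀ lam, 1 ≤ lam → f s ≤ Real.exp 1 * lam ^ (α + 1) * f (lam * s)) := by
  set η : ℝ := min (α - β) 1 / 2 with hηdef
  have hη : 0 < η := by
    apply div_pos _ (by norm_num)
    exact lt_min (by linarith) one_pos
  have hη1 : η < 1 := by
    have : min (α - β) 1 ≤ 1 := min_le_right _ _
    rw [hηdef]; linarith
  have hηβ : η ≤ α - β := by
    have : min (α - β) 1 ≤ α - β := min_le_left _ _
    rw [hηdef]; linarith
  obtain ⟨X, hXpos, hX⟩ := unif_bound f α hfm hfpos hfreg hη hη1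
  have main : ∀ s, max (Real.exp X) 1 ≤ s → ∀ lam, 1 ≤ lam →
      f (lam * s) ≤ Real.exp 1 * lam ^ (-β) * f s ∧
      f s ≤ Real.exp 1 * lam ^ (α + 1) * f (lam * s) := by
    intro s hs lam hlam
    have hs0 : 0 < s := lt_of_lt_of_le one_pos ((le_max_right _ _).trans hs)
    have hlam0 : 0 < lam := lt_of_lt_of_le one_pos hlam
    have base : ∀ x, X ≤ x → ∀ w ∈ Set.Icc (0:ℝ) 1,
        f (Real.exp (x + w)) ≤ Real.exp (-α * w + η) * f (Real.exp x) ∧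
        f (Real.exp x) ≤ Real.exp (α * w + η) * f (Real.exp (x + w)) := by
      intro x hx w hw
      have hp1 : 0 < f (Real.exp x) := hXpos _ (Real.exp_le_exp.mpr hx)
      have hp2 : 0 < f (Real.exp (x + w)) := hXpos _ (Real.exp_le_exp.mpr (by linarith [hw.1]))
      have habs := hX x hx w hw
      rw [abs_le] at habs
      constructor
      · have h' : Real.log (f (Real.exp (x + w))) ≤ (-α * w + η) + Real.log (f (Real.exp x)) := by
          linarith [habs.2]
        calc f (Real.exp (x + w)) = Real.exp (Real.log (f (Real.exp (x + w)))) :=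
              (Real.exp_log hp2).symm
          _ ≤ Real.exp ((-α * w + η) + Real.log (f (Real.exp x))) := Real.exp_le_exp.mpr h'
          _ = Real.exp (-α * w + η) * f (Real.exp x) := by
              rw [Real.exp_add, Real.exp_log hp1]
      · have h' : Real.log (f (Real.exp x)) ≤ (α * w + η) + Real.log (f (Real.exp (x + w))) := by
          linarith [habs.1]
        calc f (Real.exp x) = Real.exp (Real.log (f (Real.exp x))) := (Real.exp_log hp1).symm
          _ ≤ Real.exp ((α * w + η) + Real.log (f (Real.exp (x + w)))) := Real.exp_le_exp.mpr h'
          _ = Real.exp (α * w + η) * f (Real.exp (x + w)) := by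
              rw [Real.exp_add, Real.exp_log hp2]
    have iter : ∀ m : ℕ, ∀ x, X ≤ x →
        f (Real.exp (x + m)) ≤ Real.exp (m * (-α + η)) * f (Real.exp x) ∧
        f (Real.exp x) ≤ Real.exp (m * (α + η)) * f (Real.exp (x + m)) := by
      intro m
      induction m with
      | zero => intro x hx; simp
      | succ m ih =>
        intro x hx
        have hxm : X ≤ x + m := by
          have : (0:ℝ) ≤ m := Nat.cast_nonneg m
          linarith
        have hb := base (x + m) hxm 1 (by constructor <;> norm_num)
        have hi := ih x hx
        have hcast : x + ((m : ℝ) + 1) = (x + m) + 1 := by ring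
        have hpos1 : 0 < f (Real.exp (x + m)) := hXpos _ (Real.exp_le_exp.mpr hxm)
        have hco1 : (-α * 1 + η) + (m:ℝ) * (-α + η) = ((m:ℝ) + 1) * (-α + η) := by ring
        have hco2 : (m:ℝ) * (α + η) + (α * 1 + η) = ((m:ℝ) + 1) * (α + η) := by ring
        constructor
        · push_cast
          rw [← add_assoc]
          calc f (Real.exp (x + (m:ℝ) + 1))
              ≤ Real.exp (-α * 1 + η) * f (Real.exp (x + (m:ℝ))) := hb.1
            _ ≤ Real.exp (-α * 1 + η) * (Real.exp ((m:ℝ) * (-α + η)) * f (Real.exp x)) :=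
              mul_le_mul_of_nonneg_left hi.1 (Real.exp_nonneg _)
            _ = Real.exp (((m:ℝ) + 1) * (-α + η)) * f (Real.exp x) := by
              rw [← mul_assoc, ← Real.exp_add, hco1]
        · push_cast
          rw [← add_assoc]
          calc f (Real.exp x) ≤ Real.exp ((m:ℝ) * (α + η)) * f (Real.exp (x + (m:ℝ))) := hi.2
            _ ≤ Real.exp ((m:ℝ) * (α + η)) * (Real.exp (α * 1 + η) * f (Real.exp (x + (m:ℝ) + 1))) :=
              mul_le_mul_of_nonneg_left hb.2 (Real.exp_nonneg _)
            _ = Real.exp (((m:ℝ) + 1) * (α + η)) * f (Real.exp (x + (m:ℝ) + 1)) := by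
              rw [← mul_assoc, ← Real.exp_add, hco2]
    set x := Real.log s with hxdef
    have hxX : X ≤ x := by
      rw [hxdef, Real.le_log_iff_exp_le hs0]
      exact (le_max_left _ _).trans hs
    set u := Real.log lam with hudef
    have hu0 : 0 ≤ u := Real.log_nonneg hlam
    set m := ⌊u⌋₊ with hmdef
    set w := u - (m:ℝ) with hwdef
    have hmu : (m:ℝ) ≤ u := Nat.floor_le hu0
    have hw : w ∈ Set.Icc (0:ℝ) 1 := by
      constructor
      · rw [hwdef]; linarith
      · rw [hwdef]
        have := Nat.lt_floor_add_one u
        linarith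
    have hxmX : X ≤ x + m := by
      have : (0:ℝ) ≤ m := Nat.cast_nonneg m
      linarith
    have e1 : lam * s = Real.exp ((x + m) + w) := by
      have : (x + m) + w = x + u := by rw [hwdef]; ring
      rw [this, Real.exp_add, hxdef, hudef, Real.exp_log hs0, Real.exp_log hlam0, mul_comm]
    have e2 : s = Real.exp x := by rw [hxdef, Real.exp_log hs0]
    have hfs : 0 < f s := hXpos s ((le_max_left _ _).trans hs)
    have k1 : η * m ≤ η * u := mul_le_mul_of_nonneg_left hmu hη.le
    constructor
    · calc f (lam * s) = f (Real.exp ((x + m) + w)) := by rw [e1]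
        _ ≤ Real.exp (-α * w + η) * f (Real.exp (x + m)) := (base _ hxmX w hw).1
        _ ≤ Real.exp (-α * w + η) * (Real.exp (m * (-α + η)) * f (Real.exp x)) :=
          mul_le_mul_of_nonneg_left (iter m x hxX).1 (Real.exp_nonneg _)
        _ = Real.exp ((-α * w + η) + m * (-α + η)) * f s := by
          rw [← e2, ← mul_assoc, ← Real.exp_add]
        _ ≤ Real.exp 1 * lam ^ (-β) * f s := by
          apply mul_le_mul_of_nonneg_right _ hfs.le
          rw [Real.rpow_def_of_pos hlam0, ← Real.exp_add]
          apply Real.exp_le_exp.mpr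
          have k2 : 0 ≤ (α - β - η) * u := mul_nonneg (by linarith) hu0
          have hwu : w = u - m := hwdef
          nlinarith [k1, k2]
    · calc f s = f (Real.exp x) := by rw [e2]
        _ ≤ Real.exp (m * (α + η)) * f (Real.exp (x + m)) := (iter m x hxX).2
        _ ≤ Real.exp (m * (α + η)) * (Real.exp (α * w + η) * f (Real.exp ((x + m) + w))) :=
          mul_le_mul_of_nonneg_left (base _ hxmX w hw).2 (Real.exp_nonneg _)
        _ = Real.exp (m * (α + η) + (α * w + η)) * f (lam * s) := by
          rw [e1, ← mul_assoc, ← Real.exp_add]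
        _ ≤ Real.exp 1 * lam ^ (α + 1) * f (lam * s) := by
          apply mul_le_mul_of_nonneg_right _ (hXpos _ ?_).le
          · rw [Real.rpow_def_of_pos hlam0, ← Real.exp_add]
            apply Real.exp_le_exp.mpr
            have k3 : η * u ≤ 1 * u := mul_le_mul_of_nonneg_right hη1.le hu0
            have hwu : w = u - m := hwdef
            nlinarith [k1, k3]
          · calc Real.exp X ≤ max (Real.exp X) 1 := le_max_left _ _
              _ ≤ s := hs
              _ = 1 * s := (one_mul s).symm
              _ ≤ lam * s := mul_le_mul_of_nonneg_right hlam hs0.le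

  exact ⟨max (Real.exp X) 1, le_max_right _ _,
    fun s hs => hXpos s ((le_max_left _ _).trans hs),
    fun s hs lam hlam => (main s hs lam hlam).1,
    fun s hs lam hlam => (main s hs lam hlam).2⟩

lemma lintegral_pi_prod {d n : ℕ} (g : Fin n → Euc d → ℝ≥0∞) (hg : ∀ i, Measurable (g i)) :
    ∫⁻ y : Fin n → Euc d, ∏ i, g i (y i) = ∏ i, ∫⁻ z, g i z := by
  induction n with
  | zero =>
    simp only [Finset.univ_eq_empty, Finset.prod_empty, lintegral_const, one_mul]
    rw [MeasureTheory.volume_pi, Measure.pi_univ]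
    simp
  | succ n ih =>
    have hmp := measurePreserving_piFinSuccAbove (fun _ : Fin (n + 1) => (volume : Measure (Euc d))) 0
    set T := MeasurableEquiv.piFinSuccAbove (fun _ : Fin (n + 1) => Euc d) 0 with hT
    set Gp : Euc d × (Fin n → Euc d) → ℝ≥0∞ :=
      fun p => g 0 p.1 * ∏ j : Fin n, g (Fin.succ j) (p.2 j) with hGp
    have hGpm : Measurable Gp := by
      apply Measurable.mul
      · exact (hg 0).comp measurable_fst
      · exact Finset.measurable_prod _ fun j _ =>
          (hg (Fin.succ j)).comp ((measurable_pi_apply j).comp measurable_snd)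
    have hcomp : ∀ y : Fin (n + 1) → Euc d, Gp (T y) = ∏ i, g i (y i) := by
      intro y
      rw [Fin.prod_univ_succ]
      simp only [hGp, hT, MeasurableEquiv.piFinSuccAbove_apply]
      simp [Fin.insertNthEquiv, Fin.removeNth, Fin.zero_succAbove, Fin.tail]
    have step0 : (∫⁻ y : Fin (n + 1) → Euc d, ∏ i, g i (y i)) = ∫⁻ p, Gp p
        ∂((volume : Measure (Euc d)).prod (Measure.pi fun _ : Fin n => volume)) := by
      rw [hmp.lintegral_map_equiv Gp]
      rw [MeasureTheory.volume_pi]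
      apply lintegral_congr
      intro y
      exact (hcomp y).symm
    rw [step0, lintegral_prod _ hGpm.aemeasurable]
    have inner : ∀ a : Euc d, (∫⁻ z, Gp (a, z) ∂(Measure.pi fun _ : Fin n => volume))
        = g 0 a * ∏ j : Fin n, ∫⁻ b, g (Fin.succ j) b := by
      intro a
      simp only [hGp]
      rw [lintegral_const_mul _ ((Finset.measurable_prod _ fun j _ =>
        (hg (Fin.succ j)).comp (measurable_pi_apply j) :
        Measurable fun z : Fin n → Euc d => ∏ j : Fin n, g (Fin.succ j) (z j)))]
      congr 1
      rw [← MeasureTheory.volume_pi]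
      exact ih (fun j => g (Fin.succ j)) (fun j => hg _)
    simp_rw [inner]
    rw [lintegral_mul_const _ (hg 0), Fin.prod_univ_succ]


lemma overlap_bound {d : ℕ} {n : ℕ} (hn : 0 < n) (f : ℝ → ℝ) (hfm : Measurable f)
    (hfnn : ∀ r, 0 ≤ f r)
    (φ : (Fin n → Euc d) → ℝ) (hφm : Measurable φ)
    (hφ0 : ∀ y, 0 ≤ φ y) (hφ1 : ∀ y, φ y ≤ 1)
    (L' M r : ℝ) (hM : 0 ≤ M)
    (hsup : ∀ y : Fin n → Euc d, φ y ≠ 0 → ∀ i, dist (y i) (y ⟨0, hn⟩) ≤ L')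
    (hfM : ∀ b : Euc d, r ≤ ‖b‖ → f ‖b‖ ≤ M) :
    ∫⁻ y in {y : Fin n → Euc d | ∀ i, r ≤ ‖y i‖}, ENNReal.ofReal (φ y * ∏ i, f ‖y i‖) ≤
      (∫⁻ a in {a : Euc d | r ≤ ‖a‖}, ENNReal.ofReal (f ‖a‖)) *
        (ENNReal.ofReal M * volume (Metric.closedBall (0 : Euc d) L')) ^ (n - 1) := by
  obtain ⟨m, rfl⟩ : ∃ m, n = m + 1 := ⟨n - 1, (Nat.succ_pred_eq_of_pos hn).symm⟩
  have hz : (⟨0, hn⟩ : Fin (m + 1)) = 0 := rfl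
  set F₀ : Euc d → ℝ≥0∞ :=
    fun a => Set.indicator {a : Euc d | r ≤ ‖a‖} (fun a => ENNReal.ofReal (f ‖a‖)) a with hF₀
  set F₁ : Euc d → Euc d → ℝ≥0∞ :=
    fun a b => Set.indicator (Metric.closedBall a L') (fun _ => ENNReal.ofReal M) b with hF₁
  have hsetm : MeasurableSet {a : Euc d | r ≤ ‖a‖} :=
    measurableSet_le measurable_const measurable_norm
  have hF₀m : Measurable F₀ :=
    ((ENNReal.measurable_ofReal.comp (hfm.comp measurable_norm))).indicator hsetm
  have hF₁m : ∀ a, Measurable (F₁ a) := fun a =>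
    measurable_const.indicator measurableSet_closedBall
  have hSm : MeasurableSet {y : Fin (m + 1) → Euc d | ∀ i, r ≤ ‖y i‖} := by
    rw [Set.setOf_forall]
    exact MeasurableSet.iInter fun i =>
      measurableSet_le measurable_const (measurable_norm.comp (measurable_pi_apply i))
  set G : (Fin (m + 1) → Euc d) → ℝ≥0∞ :=
    fun y => F₀ (y 0) * ∏ j : Fin m, F₁ (y 0) (y j.succ) with hG
  -- pointwise bound
  have hpt : ∀ y, Set.indicator {y : Fin (m + 1) → Euc d | ∀ i, r ≤ ‖y i‖}
      (fun y => ENNReal.ofReal (φ y * ∏ i, f ‖y i‖)) y ≤ G y := by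
    intro y
    by_cases hyS : y ∈ {y : Fin (m + 1) → Euc d | ∀ i, r ≤ ‖y i‖}
    · rw [Set.indicator_of_mem hyS]
      by_cases hφy : φ y = 0
      · simp [hφy]
      · have hdist := hsup y hφy
        have hF₀v : F₀ (y 0) = ENNReal.ofReal (f ‖y 0‖) := by
          simp only [hF₀]
          rw [Set.indicator_of_mem (show y 0 ∈ {a : Euc d | r ≤ ‖a‖} from hyS 0)]
        have hF₁v : ∀ j : Fin m, F₁ (y 0) (y j.succ) = ENNReal.ofReal M := by
          intro j
          apply Set.indicator_of_mem
          rw [Metric.mem_closedBall]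
          have := hdist j.succ
          rwa [hz] at this
        have hprodnn : (0:ℝ) ≤ ∏ i, f ‖y i‖ :=
          Finset.prod_nonneg fun i _ => hfnn _
        calc ENNReal.ofReal (φ y * ∏ i, f ‖y i‖)
            ≤ ENNReal.ofReal (∏ i, f ‖y i‖) :=
              ENNReal.ofReal_le_ofReal (mul_le_of_le_one_left hprodnn (hφ1 y))
          _ = ∏ i, ENNReal.ofReal (f ‖y i‖) :=
              ENNReal.ofReal_prod_of_nonneg (fun i _ => hfnn _)
          _ = ENNReal.ofReal (f ‖y 0‖) * ∏ j : Fin m, ENNReal.ofReal (f ‖y j.succ‖) :=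
              Fin.prod_univ_succ _
          _ ≤ F₀ (y 0) * ∏ j : Fin m, F₁ (y 0) (y j.succ) := by
              rw [hF₀v]
              apply mul_le_mul_right
              apply Finset.prod_le_prod'
              intro j _
              rw [hF₁v j]
              exact ENNReal.ofReal_le_ofReal (hfM _ (hyS j.succ))
    · rw [Set.indicator_of_notMem hyS]
      exact zero_le
  -- Tonelli for G
  have hGint : (∫⁻ y, G y) = (∫⁻ a in {a : Euc d | r ≤ ‖a‖}, ENNReal.ofReal (f ‖a‖)) *
      (ENNReal.ofReal M * volume (Metric.closedBall (0 : Euc d) L')) ^ m := by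
    have hmp := measurePreserving_piFinSuccAbove
      (fun _ : Fin (m + 1) => (volume : Measure (Euc d))) 0
    set T := MeasurableEquiv.piFinSuccAbove (fun _ : Fin (m + 1) => Euc d) 0 with hT
    set Gp : Euc d × (Fin m → Euc d) → ℝ≥0∞ :=
      fun p => F₀ p.1 * ∏ j : Fin m, F₁ p.1 (p.2 j) with hGp
    have hGpm : Measurable Gp := by
      apply Measurable.mul
      · exact hF₀m.comp measurable_fst
      · apply Finset.measurable_prod
        intro j _
        have : (fun p : Euc d × (Fin m → Euc d) => F₁ p.1 (p.2 j)) =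
            Set.indicator {p : Euc d × (Fin m → Euc d) | dist (p.2 j) p.1 ≤ L'}
              (fun _ => ENNReal.ofReal M) := by
          funext p
          simp only [hF₁, Set.indicator]
          congr 1
        rw [this]
        exact measurable_const.indicator
          (measurableSet_le (((measurable_pi_apply j).comp measurable_snd).dist measurable_fst)
            measurable_const)
    have hcomp : ∀ y : Fin (m + 1) → Euc d, Gp (T y) = G y := by
      intro y
      simp only [hGp, hG, hT, MeasurableEquiv.piFinSuccAbove_apply]
      simp [Fin.insertNthEquiv, Fin.removeNth, Fin.zero_succAbove, Fin.tail]
    have step0 : (∫⁻ y, G y) = ∫⁻ p, Gp p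
        ∂((volume : Measure (Euc d)).prod (Measure.pi fun _ : Fin m => volume)) := by
      rw [hmp.lintegral_map_equiv Gp]
      rw [MeasureTheory.volume_pi]
      apply lintegral_congr
      intro y
      exact (hcomp y).symm
    have hW : ∀ a : Euc d, (∫⁻ b, F₁ a b) =
        ENNReal.ofReal M * volume (Metric.closedBall (0 : Euc d) L') := by
      intro a
      rw [hF₁]
      rw [lintegral_indicator measurableSet_closedBall, setLIntegral_const,
        Measure.addHaar_closedBall_center]
    have inner : ∀ a : Euc d, (∫⁻ z, Gp (a, z) ∂(Measure.pi fun _ : Fin m => volume))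
        = F₀ a * (ENNReal.ofReal M * volume (Metric.closedBall (0 : Euc d) L')) ^ m := by
      intro a
      simp only [hGp]
      rw [lintegral_const_mul _ ((Finset.measurable_prod _ fun j _ =>
        (hF₁m a).comp (measurable_pi_apply j) :
        Measurable fun z : Fin m → Euc d => ∏ j : Fin m, F₁ a (z j)))]
      congr 1
      rw [← MeasureTheory.volume_pi]
      rw [lintegral_pi_prod (fun _ => F₁ a) (fun _ => hF₁m a)]
      simp_rw [hW a]
      rw [Finset.prod_const, Finset.card_univ, Fintype.card_fin]
    rw [step0, lintegral_prod _ hGpm.aemeasurable]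
    simp_rw [inner]
    rw [lintegral_mul_const _ hF₀m]
    rw [hF₀, lintegral_indicator hsetm]
  calc ∫⁻ y in {y : Fin (m + 1) → Euc d | ∀ i, r ≤ ‖y i‖},
        ENNReal.ofReal (φ y * ∏ i, f ‖y i‖)
      = ∫⁻ y, Set.indicator {y : Fin (m + 1) → Euc d | ∀ i, r ≤ ‖y i‖}
          (fun y => ENNReal.ofReal (φ y * ∏ i, f ‖y i‖)) y := (lintegral_indicator hSm _).symm
    _ ≤ ∫⁻ y, G y := lintegral_mono hpt
    _ = (∫⁻ a in {a : Euc d | r ≤ ‖a‖}, ENNReal.ofReal (f ‖a‖)) *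
        (ENNReal.ofReal M * volume (Metric.closedBall (0 : Euc d) L')) ^ (m + 1 - 1) := by
        rw [hGint]
        norm_num

lemma tail_bound (d : ℕ) (hd : 1 ≤ d) (f : ℝ → ℝ) (hfnn : ∀ r, 0 ≤ f r)
    {β S A' : ℝ} (hβd : (d : ℝ) < β) (hS1 : 1 ≤ S) (hA : 0 ≤ A')
    (hpot : ∀ s, S ≤ s → ∀ lam, 1 ≤ lam → f (lam * s) ≤ A' * lam ^ (-β) * f s) :
    ∃ K : ℝ, 0 < K ∧ ∀ r, S ≤ r →
      ∫⁻ a in {a : Euc d | r ≤ ‖a‖}, ENNReal.ofReal (f ‖a‖) ≤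
        ENNReal.ofReal (A' * f r * r ^ d * K) := by
  haveI : Nontrivial (Euc d) := by
    have : Nonempty (Fin d) := ⟨⟨0, hd⟩⟩
    infer_instance
  set q : ℝ := (2:ℝ) ^ ((d:ℝ) - β) with hqdef
  have hq0 : 0 ≤ q := (Real.rpow_pos_of_pos two_pos _).le
  have hq1 : q < 1 := Real.rpow_lt_one_of_one_lt_of_neg one_lt_two (by linarith)
  set V₁ : ℝ≥0∞ := volume (Metric.ball (0 : Euc d) 1) with hV₁
  have hV₁top : V₁ ≠ ⊤ := measure_ball_lt_top.ne
  set w : ℝ≥0∞ := ENNReal.ofReal q with hw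
  have hw1 : w < 1 := by
    rw [hw]
    exact ENNReal.ofReal_lt_one.mpr hq1
  set Kenn : ℝ≥0∞ := ENNReal.ofReal ((2:ℝ) ^ d) * V₁ * (1 - w)⁻¹ with hKenn
  have hKenntop : Kenn ≠ ⊤ := by
    apply ENNReal.mul_ne_top (ENNReal.mul_ne_top ENNReal.ofReal_ne_top hV₁top)
    rw [ENNReal.inv_ne_top]
    exact (tsub_pos_of_lt hw1).ne'
  refine ⟨Kenn.toReal + 1, by positivity, ?_⟩
  intro r hr
  have hr0 : 0 < r := lt_of_lt_of_le one_pos (hS1.trans hr)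
  set Aset : ℕ → Set (Euc d) := fun j => {a | r * 2 ^ j ≤ ‖a‖ ∧ ‖a‖ < r * 2 ^ (j + 1)}
    with hAset
  have hcover : {a : Euc d | r ≤ ‖a‖} ⊆ ⋃ j, Aset j := by
    intro a ha
    have hP : ∃ j : ℕ, ‖a‖ < r * 2 ^ (j + 1) := by
      obtain ⟨N, hN⟩ := pow_unbounded_of_one_lt (‖a‖ / r) one_lt_two
      refine ⟨N, ?_⟩
      have : ‖a‖ / r < 2 ^ (N + 1) :=
        hN.trans_le (pow_le_pow_right₀ one_le_two (Nat.le_succ N))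
      calc ‖a‖ = (‖a‖ / r) * r := (div_mul_cancel₀ _ hr0.ne').symm
        _ < 2 ^ (N + 1) * r := by
          exact mul_lt_mul_of_pos_right this hr0
        _ = r * 2 ^ (N + 1) := mul_comm _ _
    refine Set.mem_iUnion.mpr ⟨Nat.find hP, ?_, Nat.find_spec hP⟩
    rcases Nat.eq_zero_or_pos (Nat.find hP) with h0 | hpos
    · rw [h0]
      simpa using ha
    · obtain ⟨j', hj'⟩ := Nat.exists_eq_succ_of_ne_zero hpos.ne'
      rw [hj']
      have := Nat.find_min hP (by rw [hj']; exact Nat.lt_succ_self j')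
      push_neg at this
      simpa using this
  have hmeas : ∀ j, MeasurableSet (Aset j) := by
    intro j
    apply MeasurableSet.inter
    · exact measurableSet_le measurable_const measurable_norm
    · exact measurableSet_lt measurable_norm measurable_const
  -- per-annulus bound
  have hterm : ∀ j : ℕ, (∫⁻ a in Aset j, ENNReal.ofReal (f ‖a‖)) ≤
      (ENNReal.ofReal (A' * f r * r ^ d * (2:ℝ) ^ d) * V₁) * w ^ j := by
    intro j
    have h2j : (1:ℝ) ≤ 2 ^ j := one_le_pow₀ one_le_two
    have hfb : ∀ a ∈ Aset j, ENNReal.ofReal (f ‖a‖) ≤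
        ENNReal.ofReal (A' * ((2:ℝ) ^ j) ^ (-β) * f r) := by
      intro a haj
      apply ENNReal.ofReal_le_ofReal
      have hlam1 : (1:ℝ) ≤ ‖a‖ / r := by
        rw [le_div_iff₀ hr0]
        calc 1 * r = r := one_mul r
          _ = r * 1 := (mul_one r).symm
          _ ≤ r * 2 ^ j := by
            apply mul_le_mul_of_nonneg_left h2j hr0.le
          _ ≤ ‖a‖ := haj.1
      have heq : ‖a‖ = (‖a‖ / r) * r := (div_mul_cancel₀ _ hr0.ne').symm
      have h2jlam : (2:ℝ) ^ j ≤ ‖a‖ / r := by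
        rw [le_div_iff₀ hr0, mul_comm]
        exact haj.1
      calc f ‖a‖ = f ((‖a‖ / r) * r) := by rw [← heq]
        _ ≤ A' * (‖a‖ / r) ^ (-β) * f r := hpot r hr _ hlam1
        _ ≤ A' * ((2:ℝ) ^ j) ^ (-β) * f r := by
          apply mul_le_mul_of_nonneg_right _ (hfnn r)
          apply mul_le_mul_of_nonneg_left _ hA
          exact Real.rpow_le_rpow_of_nonpos (by positivity) h2jlam (by linarith)
    have hvol : volume (Aset j) ≤ ENNReal.ofReal ((r * 2 ^ (j+1)) ^ d) * V₁ := by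
      calc volume (Aset j) ≤ volume (Metric.ball (0 : Euc d) (r * 2 ^ (j+1))) := by
            apply measure_mono
            intro a haj
            rw [mem_ball_zero_iff]
            exact haj.2
        _ = ENNReal.ofReal ((r * 2 ^ (j+1)) ^ d) * V₁ := by
          rw [Measure.addHaar_ball volume _ (by positivity), finrank_euclideanSpace_fin]
    calc (∫⁻ a in Aset j, ENNReal.ofReal (f ‖a‖))
        ≤ ∫⁻ _ in Aset j, ENNReal.ofReal (A' * ((2:ℝ) ^ j) ^ (-β) * f r) :=
          setLIntegral_mono' (hmeas j) hfb
      _ = ENNReal.ofReal (A' * ((2:ℝ) ^ j) ^ (-β) * f r) * volume (Aset j) :=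
          setLIntegral_const _ _
      _ ≤ ENNReal.ofReal (A' * ((2:ℝ) ^ j) ^ (-β) * f r) *
          (ENNReal.ofReal ((r * 2 ^ (j+1)) ^ d) * V₁) :=
          mul_le_mul_of_nonneg_left hvol zero_le
      _ = (ENNReal.ofReal (A' * f r * r ^ d * (2:ℝ) ^ d) * V₁) * w ^ j := by
          have hnn1 : (0:ℝ) ≤ A' * ((2:ℝ) ^ j) ^ (-β) * f r :=
            mul_nonneg (mul_nonneg hA (Real.rpow_nonneg (by positivity) _)) (hfnn r)
          have hnn2 : (0:ℝ) ≤ A' * f r * r ^ d * (2:ℝ) ^ d :=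
            mul_nonneg (mul_nonneg (mul_nonneg hA (hfnn r)) (by positivity)) (by positivity)
          have e1 : ((2:ℝ) ^ j) ^ (-β) = (2:ℝ) ^ ((j:ℝ) * (-β)) := by
            rw [← Real.rpow_natCast (2:ℝ) j, ← Real.rpow_mul (by norm_num)]
          have e2 : ((r * 2 ^ (j+1)) ^ d : ℝ) = r ^ d * (2:ℝ) ^ (((j+1) * d : ℕ) : ℝ) := by
            rw [mul_pow, ← pow_mul, Real.rpow_natCast]
          have e3 : (q ^ j : ℝ) = (2:ℝ) ^ (((d:ℝ) - β) * (j:ℝ)) := by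
            rw [hqdef, ← Real.rpow_natCast ((2:ℝ) ^ ((d:ℝ) - β)) j, ← Real.rpow_mul (by norm_num)]
          have key2 : (2:ℝ) ^ ((j:ℝ) * (-β)) * (2:ℝ) ^ ((((j+1) * d : ℕ)):ℝ)
              = (2:ℝ) ^ ((d:ℕ):ℝ) * (2:ℝ) ^ (((d:ℝ) - β) * (j:ℝ)) := by
            rw [← Real.rpow_add two_pos, ← Real.rpow_add two_pos]
            congr 1
            push_cast
            ring
          have hreal : A' * ((2:ℝ) ^ j) ^ (-β) * f r * ((r * 2 ^ (j+1)) ^ d)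
              = (A' * f r * r ^ d * (2:ℝ) ^ d) * q ^ j := by
            rw [e1, e2, e3, ← Real.rpow_natCast (2:ℝ) d]
            linear_combination (A' * f r * r ^ d) * key2
          rw [← mul_assoc, ← ENNReal.ofReal_mul hnn1, hreal, ENNReal.ofReal_mul hnn2,
            hw, ← ENNReal.ofReal_pow hq0]
          ring
  have hnn3 : (0:ℝ) ≤ A' * f r * r ^ d :=
    mul_nonneg (mul_nonneg hA (hfnn r)) (by positivity)
  calc (∫⁻ a in {a : Euc d | r ≤ ‖a‖}, ENNReal.ofReal (f ‖a‖))
      ≤ ∫⁻ a in ⋃ j, Aset j, ENNReal.ofReal (f ‖a‖) := lintegral_mono_set hcover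
    _ ≤ ∑' j, ∫⁻ a in Aset j, ENNReal.ofReal (f ‖a‖) := lintegral_iUnion_le _ _
    _ ≤ ∑' j, (ENNReal.ofReal (A' * f r * r ^ d * (2:ℝ) ^ d) * V₁) * w ^ j :=
        ENNReal.tsum_le_tsum hterm
    _ = ENNReal.ofReal (A' * f r * r ^ d * (2:ℝ) ^ d) * V₁ * (1 - w)⁻¹ := by
        rw [ENNReal.tsum_mul_left, ENNReal.tsum_geometric]
    _ = ENNReal.ofReal (A' * f r * r ^ d) * Kenn := by
        rw [ENNReal.ofReal_mul hnn3, hKenn]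
        ring
    _ ≤ ENNReal.ofReal (A' * f r * r ^ d * (Kenn.toReal + 1)) := by
        rw [ENNReal.ofReal_mul hnn3]
        apply mul_le_mul_right
        calc Kenn = ENNReal.ofReal Kenn.toReal := (ENNReal.ofReal_toReal hKenntop).symm
          _ ≤ ENNReal.ofReal Kenn.toReal + 1 := le_self_add
          _ = ENNReal.ofReal (Kenn.toReal + 1) := by
              rw [ENNReal.ofReal_add ENNReal.toReal_nonneg zero_le_one, ENNReal.ofReal_one]

set_option maxHeartbeats 2000000 in
/-- the uniform tail bound for the `ℓ`-overlap integral. -/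
theorem layered_overlap_tail_bound
    (d k : ℕ) (hd : 1 ≤ d) (hk : 1 ≤ k) (α : ℝ) (hα : (d : ℝ) < α)
    (f : ℝ → ℝ) (hfm : Measurable f) (hfnn : ∀ r, 0 ≤ f r)
    (hfprob : (∫ x : Euc d, f ‖x‖) = 1)
    (hfpos : ∀ᶠ r in atTop, 0 < f r)
    (hfreg : ∀ r : ℝ, 0 < r → Tendsto (fun t => f (t * r) / f t) atTop (𝓝 (r ^ (-α))))
    (h : (Fin k → Euc d) → ℝ) (hhm : Measurable h)
    (hh01 : ∀ y, h y = 0 ∨ h y = 1)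
    (hhperm : ∀ (σ : Equiv.Perm (Fin k)) (y : Fin k → Euc d), h (y ∘ σ) = h y)
    (hhtrans : ∀ (x : Euc d) (y : Fin k → Euc d), h (fun i => x + y i) = h y)
    (L : ℝ) (hL : 0 < L)
    (hhdiam : ∀ y : Fin k → Euc d, (∃ i j, L < dist (y i) (y j)) → h y = 0)
    (hh1 : k = 1 → ∀ y, h y = 1) :
    ∀ ℓ : ℕ, 1 ≤ ℓ → ℓ ≤ k → ∀ δ : ℝ, 0 < δ → ∀ ε : ℝ, 0 < ε → ε < α - d →
      ∃ C : ℝ, 0 < C ∧ ∃ R₀ : ℝ, 0 < R₀ ∧ ∀ R : ℝ, R₀ ≤ R → ∀ t : ℝ, δ ≤ t →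
        (R ^ d * f R ^ (2 * k - ℓ))⁻¹ *
            (∫ y in {y : Fin (2 * k - ℓ) → Euc d | ∀ i, t * R ≤ ‖y i‖},
              h (sel1 k y) * h (sel2 k ℓ y) * ∏ i, f ‖y i‖) ≤
          C * t ^ ((d : ℝ) - ((2 * k - ℓ : ℕ) : ℝ) * (α - ε)) := by
  intro ℓ hℓ1 hℓk δ hδ ε hε hεα
  have hd1 : (1:ℝ) ≤ d := by exact_mod_cast hd
  set β := α - ε with hβdef
  have hβd : (d:ℝ) < β := by rw [hβdef]; linarith
  have hβ0 : 0 < β := by linarith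
  have hβα : β < α := by rw [hβdef]; linarith
  obtain ⟨S, hS1, hSpos, hup, hlow⟩ := potter f α hfm hfpos hfreg hβ0 hβα
  have hA'0 : (0:ℝ) < Real.exp 1 := Real.exp_pos 1
  obtain ⟨K, hK0, htail⟩ := tail_bound d hd f hfnn hβd hS1 hA'0.le hup
  set n := 2 * k - ℓ with hndef
  have hn : 0 < n := by omega
  have hn1 : n - 1 + 1 = n := Nat.succ_pred_eq_of_pos hn
  set W := (volume (Metric.closedBall (0 : Euc d) L)).toReal with hWdef
  have hWfin : volume (Metric.closedBall (0 : Euc d) L) ≠ ⊤ := measure_closedBall_lt_top.ne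
  have hW0 : 0 < W := by
    rw [hWdef]
    exact ENNReal.toReal_pos (Metric.measure_closedBall_pos volume 0 hL).ne' hWfin
  set P := Real.exp 1 * ((1/δ) ^ (α+1) + 1) with hPdef
  have hdelt : (0:ℝ) ≤ (1/δ) ^ (α+1) := Real.rpow_nonneg (by positivity) _
  have hP0 : 0 < P := by
    apply mul_pos hA'0
    linarith
  set C := (Real.exp 1 * P) ^ n * K * W ^ (n-1) with hCdef
  have hC0 : 0 < C :=
    mul_pos (mul_pos (pow_pos (mul_pos hA'0 hP0) n) hK0) (pow_pos hW0 _)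
  refine ⟨C, hC0, max S (S/δ), lt_of_lt_of_le (lt_of_lt_of_le one_pos hS1) (le_max_left _ _), ?_⟩
  intro R hR t ht
  have hRS : S ≤ R := (le_max_left _ _).trans hR
  have hR0 : 0 < R := lt_of_lt_of_le (lt_of_lt_of_le one_pos hS1) hRS
  have ht0 : 0 < t := lt_of_lt_of_le hδ ht
  have hr0 : 0 < t * R := mul_pos ht0 hR0
  have hrS : S ≤ t * R := by
    have h1 : S / δ ≤ R := (le_max_right _ _).trans hR
    calc S = δ * (S / δ) := by field_simp
      _ ≤ δ * R := mul_le_mul_of_nonneg_left h1 hδ.le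
      _ ≤ t * R := mul_le_mul_of_nonneg_right ht hR0.le
  have hfR : 0 < f R := hSpos R hRS
  have hfr0 : (0:ℝ) ≤ f (t*R) := hfnn _
  -- sup bound on the far region
  have hfM : ∀ b : Euc d, t * R ≤ ‖b‖ → f ‖b‖ ≤ Real.exp 1 * f (t * R) := by
    intro b hb
    have hlam : 1 ≤ ‖b‖ / (t*R) := by rw [le_div_iff₀ hr0]; linarith
    have heq : ‖b‖ = (‖b‖/(t*R)) * (t*R) := (div_mul_cancel₀ _ hr0.ne').symm
    calc f ‖b‖ = f ((‖b‖/(t*R)) * (t*R)) := by rw [← heq]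
      _ ≤ Real.exp 1 * (‖b‖/(t*R)) ^ (-β) * f (t*R) := hup _ hrS _ hlam
      _ ≤ Real.exp 1 * 1 * f (t*R) := by
          apply mul_le_mul_of_nonneg_right _ hfr0
          apply mul_le_mul_of_nonneg_left _ hA'0.le
          exact Real.rpow_le_one_of_one_le_of_nonpos hlam (by linarith)
      _ = Real.exp 1 * f (t*R) := by ring
  -- ratio bound
  have hratio : f (t * R) ≤ P * t ^ (-β) * f R := by
    rcases le_total 1 t with h1t | ht1
    · calc f (t*R) ≤ Real.exp 1 * t ^ (-β) * f R := hup R hRS t h1t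
        _ ≤ P * t ^ (-β) * f R := by
            apply mul_le_mul_of_nonneg_right _ hfR.le
            apply mul_le_mul_of_nonneg_right _ (Real.rpow_nonneg ht0.le _)
            rw [hPdef]
            nlinarith [hA'0]
    · have hlam : 1 ≤ 1 / t := by rw [le_div_iff₀ ht0]; linarith
      have hl := hlow (t * R) hrS (1/t) hlam
      have he : (1/t) * (t * R) = R := by field_simp
      rw [he] at hl
      have h2 : (1/t) ^ (α+1) ≤ (1/δ) ^ (α+1) := by
        apply Real.rpow_le_rpow (by positivity) _ (by linarith)
        exact one_div_le_one_div_of_le hδ ht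
      have h3 : (1:ℝ) ≤ t ^ (-β) :=
        Real.one_le_rpow_of_pos_of_le_one_of_nonpos ht0 ht1 (by linarith)
      have hexp2 : (0:ℝ) ≤ Real.exp 1 * (1/δ) ^ (α+1) := by positivity
      calc f (t*R) ≤ Real.exp 1 * (1/t) ^ (α+1) * f R := hl
        _ ≤ Real.exp 1 * (1/δ) ^ (α+1) * f R := by
            apply mul_le_mul_of_nonneg_right _ hfR.le
            exact mul_le_mul_of_nonneg_left h2 hA'0.le
        _ ≤ Real.exp 1 * (1/δ) ^ (α+1) * t ^ (-β) * f R := by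
            apply mul_le_mul_of_nonneg_right _ hfR.le
            exact le_mul_of_one_le_right hexp2 h3
        _ ≤ P * t ^ (-β) * f R := by
            apply mul_le_mul_of_nonneg_right _ hfR.le
            apply mul_le_mul_of_nonneg_right _ (Real.rpow_nonneg ht0.le _)
            rw [hPdef]
            nlinarith [hA'0]
  -- measurability helpers
  have hvgetm : ∀ (N : ℕ) (i : ℕ), Measurable (fun z : Fin N → Euc d => vget z i) := by
    intro N i
    by_cases hi : i < N
    · have e : (fun z : Fin N → Euc d => vget z i) = fun z => z ⟨i, hi⟩ := by
        funext z; simp [vget, hi]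
      rw [e]; exact measurable_pi_apply _
    · have e : (fun z : Fin N → Euc d => vget z i) = fun _ => 0 := by
        funext z; simp [vget, hi]
      rw [e]; exact measurable_const
  have hsel1m : Measurable (sel1 k : (Fin n → Euc d) → (Fin k → Euc d)) :=
    measurable_pi_lambda _ fun i => hvgetm n (i : ℕ)
  have hsel2m : Measurable (sel2 k ℓ : (Fin n → Euc d) → (Fin k → Euc d)) := by
    apply measurable_pi_lambda
    intro j
    by_cases hj : (j:ℕ) < ℓ
    · have e : (fun y : Fin n → Euc d => sel2 k ℓ y j) = fun y => vget y (j:ℕ) := by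
        funext y; simp [sel2, hj]
      rw [e]; exact hvgetm _ _
    · have e : (fun y : Fin n → Euc d => sel2 k ℓ y j) = fun y => vget y ((j:ℕ) + (k - ℓ)) := by
        funext y; simp [sel2, hj]
      rw [e]; exact hvgetm _ _
  have hφm : Measurable (fun y : Fin n → Euc d => h (sel1 k y) * h (sel2 k ℓ y)) :=
    (hhm.comp hsel1m).mul (hhm.comp hsel2m)
  have hφ0 : ∀ y : Fin n → Euc d, 0 ≤ h (sel1 k y) * h (sel2 k ℓ y) := by
    intro y
    rcases hh01 (sel1 k y) with h1 | h1 <;> rcases hh01 (sel2 k ℓ y) with h2 | h2 <;>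
      rw [h1, h2] <;> norm_num
  have hφ1 : ∀ y : Fin n → Euc d, h (sel1 k y) * h (sel2 k ℓ y) ≤ 1 := by
    intro y
    rcases hh01 (sel1 k y) with h1 | h1 <;> rcases hh01 (sel2 k ℓ y) with h2 | h2 <;>
      rw [h1, h2] <;> norm_num
  -- diameter control
  have hsup : ∀ y : Fin n → Euc d, (h (sel1 k y) * h (sel2 k ℓ y)) ≠ 0 →
      ∀ i : Fin n, dist (y i) (y ⟨0, hn⟩) ≤ L := by
    intro y hy i
    have h1 : h (sel1 k y) ≠ 0 := fun hc => hy (by rw [hc, zero_mul])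
    have h2 : h (sel2 k ℓ y) ≠ 0 := fun hc => hy (by rw [hc, mul_zero])
    have hd1 : ∀ i j : Fin k, dist (sel1 k y i) (sel1 k y j) ≤ L := by
      by_contra hc
      push_neg at hc
      obtain ⟨i', j', hij⟩ := hc
      exact h1 (hhdiam _ ⟨i', j', hij⟩)
    have hd2 : ∀ i j : Fin k, dist (sel2 k ℓ y i) (sel2 k ℓ y j) ≤ L := by
      by_contra hc
      push_neg at hc
      obtain ⟨i', j', hij⟩ := hc
      exact h2 (hhdiam _ ⟨i', j', hij⟩)
    have hk0 : 0 < k := hk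
    have hilt : (i : ℕ) < n := i.isLt
    have e0 : vget y 0 = y ⟨0, hn⟩ := by simp [vget, hn]
    by_cases hik : (i : ℕ) < k
    · have e1 : sel1 k y ⟨(i:ℕ), hik⟩ = y i := by
        simp only [sel1, vget, hilt, dif_pos]
      have e2 : sel1 k y ⟨0, hk0⟩ = y ⟨0, hn⟩ := by
        simp only [sel1, vget]
        rw [dif_pos hn]
      have := hd1 ⟨(i:ℕ), hik⟩ ⟨0, hk0⟩
      rwa [e1, e2] at this
    · push_neg at hik
      have hjlt : (i:ℕ) - (k - ℓ) < k := by omega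
      have hjℓ : ¬ ((i:ℕ) - (k - ℓ) < ℓ) := by omega
      have e1 : sel2 k ℓ y ⟨(i:ℕ) - (k - ℓ), hjlt⟩ = y i := by
        simp only [sel2, hjℓ, if_false]
        have harg : (i:ℕ) - (k - ℓ) + (k - ℓ) = (i:ℕ) := by omega
        rw [harg]
        simp only [vget, hilt, dif_pos]
      have e2 : sel2 k ℓ y ⟨0, hk0⟩ = y ⟨0, hn⟩ := by
        have : ((0:ℕ) < ℓ) := hℓ1
        simp only [sel2, this, if_true]
        simp only [vget]
        rw [dif_pos hn]
      have := hd2 ⟨(i:ℕ) - (k - ℓ), hjlt⟩ ⟨0, hk0⟩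
      rwa [e1, e2] at this
  -- the overlap bound
  have hM0 : (0:ℝ) ≤ Real.exp 1 * f (t*R) := mul_nonneg hA'0.le hfr0
  have hover := overlap_bound hn f hfm hfnn
    (fun y => h (sel1 k y) * h (sel2 k ℓ y)) hφm hφ0 hφ1 L (Real.exp 1 * f (t*R)) (t*R)
    hM0 hsup hfM
  have htl := htail (t*R) hrS
  set B := (Real.exp 1 * f (t*R) * (t*R)^d * K) * ((Real.exp 1 * f (t*R)) * W)^(n-1) with hBdef
  have hB0 : (0:ℝ) ≤ B := by
    apply mul_nonneg
    · apply mul_nonneg (mul_nonneg hM0 (by positivity)) hK0.le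
    · exact pow_nonneg (mul_nonneg hM0 hW0.le) _
  have hIB : (∫⁻ y in {y : Fin n → Euc d | ∀ i, t*R ≤ ‖y i‖},
      ENNReal.ofReal ((h (sel1 k y) * h (sel2 k ℓ y)) * ∏ i, f ‖y i‖)) ≤ ENNReal.ofReal B := by
    calc (∫⁻ y in {y : Fin n → Euc d | ∀ i, t*R ≤ ‖y i‖},
        ENNReal.ofReal ((h (sel1 k y) * h (sel2 k ℓ y)) * ∏ i, f ‖y i‖))
        ≤ (∫⁻ a in {a : Euc d | t*R ≤ ‖a‖}, ENNReal.ofReal (f ‖a‖)) *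
          (ENNReal.ofReal (Real.exp 1 * f (t*R)) *
            volume (Metric.closedBall (0 : Euc d) L)) ^ (n - 1) := hover
      _ ≤ ENNReal.ofReal (Real.exp 1 * f (t*R) * (t*R)^d * K) *
          (ENNReal.ofReal (Real.exp 1 * f (t*R)) *
            volume (Metric.closedBall (0 : Euc d) L)) ^ (n - 1) :=
          mul_le_mul_left htl _
      _ = ENNReal.ofReal B := by
          rw [show volume (Metric.closedBall (0 : Euc d) L) = ENNReal.ofReal W from
            (ENNReal.ofReal_toReal hWfin).symm]
          rw [← ENNReal.ofReal_mul hM0, ← ENNReal.ofReal_pow (mul_nonneg hM0 hW0.le),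
            ← ENNReal.ofReal_mul (mul_nonneg (mul_nonneg hM0 (by positivity)) hK0.le)]
  -- convert Bochner integral
  have hintm : Measurable (fun y : Fin n → Euc d =>
      h (sel1 k y) * h (sel2 k ℓ y) * ∏ i, f ‖y i‖) :=
    hφm.mul (Finset.measurable_prod _ fun i _ =>
      hfm.comp (measurable_norm.comp (measurable_pi_apply i)))
  have heqint : (∫ y in {y : Fin n → Euc d | ∀ i, t * R ≤ ‖y i‖},
      h (sel1 k y) * h (sel2 k ℓ y) * ∏ i, f ‖y i‖) =
      (∫⁻ y in {y : Fin n → Euc d | ∀ i, t*R ≤ ‖y i‖},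
        ENNReal.ofReal ((h (sel1 k y) * h (sel2 k ℓ y)) * ∏ i, f ‖y i‖)).toReal := by
    apply integral_eq_lintegral_of_nonneg_ae
    · apply ae_of_all
      intro y
      exact mul_nonneg (hφ0 y) (Finset.prod_nonneg fun i _ => hfnn _)
    · exact hintm.aestronglyMeasurable
  have hIle : (∫⁻ y in {y : Fin n → Euc d | ∀ i, t*R ≤ ‖y i‖},
      ENNReal.ofReal ((h (sel1 k y) * h (sel2 k ℓ y)) * ∏ i, f ‖y i‖)).toReal ≤ B :=
    ENNReal.toReal_le_of_le_ofReal hB0 hIB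
  -- final algebra
  have hXpos : (0:ℝ) < R^d * f R^n := mul_pos (pow_pos hR0 d) (pow_pos hfR n)
  have hpowz : ∀ z : ℝ, z * z^(n-1) = z^n := by
    intro z
    conv_rhs => rw [← hn1]
    rw [pow_succ]
    ring
  have epow : (t ^ (-β))^n * t^d = t^((d:ℝ) - (n:ℝ)*β) := by
    rw [← Real.rpow_natCast (t ^ (-β)) n, ← Real.rpow_mul ht0.le, ← Real.rpow_natCast t d,
      ← Real.rpow_add ht0]
    congr 1
    ring
  have hkey : B ≤ C * t ^ ((d:ℝ) - (n:ℝ)*β) * (R^d * f R^n) := by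
    have hfrB : Real.exp 1 * f (t*R) ≤ Real.exp 1 * (P * t^(-β) * f R) :=
      mul_le_mul_of_nonneg_left hratio hA'0.le
    have hBeq : B = (Real.exp 1 * f (t*R))^n * ((t*R)^d * K * W^(n-1)) := by
      rw [hBdef, mul_pow]
      have e := hpowz (Real.exp 1 * f (t*R))
      linear_combination ((t*R)^d * K * W^(n-1)) * e
    have hstep : (Real.exp 1 * f (t*R))^n ≤ (Real.exp 1 * (P * t^(-β) * f R))^n :=
      pow_le_pow_left₀ hM0 hfrB n
    have hfinal : (Real.exp 1 * (P * t^(-β) * f R))^n * ((t*R)^d * K * W^(n-1)) =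
        C * t ^ ((d:ℝ) - (n:ℝ)*β) * (R^d * f R^n) := by
      rw [hCdef]
      simp only [mul_pow]
      linear_combination (Real.exp 1^n * P^n * f R^n * R^d * K * W^(n-1)) * epow
    calc B = (Real.exp 1 * f (t*R))^n * ((t*R)^d * K * W^(n-1)) := hBeq
      _ ≤ (Real.exp 1 * (P * t^(-β) * f R))^n * ((t*R)^d * K * W^(n-1)) := by
          apply mul_le_mul_of_nonneg_right hstep
          apply mul_nonneg (mul_nonneg (by positivity) hK0.le) (by positivity)
      _ = C * t ^ ((d:ℝ) - (n:ℝ)*β) * (R^d * f R^n) := hfinal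
  rw [heqint]
  calc (R ^ d * f R ^ n)⁻¹ * (∫⁻ y in {y : Fin n → Euc d | ∀ i, t*R ≤ ‖y i‖},
        ENNReal.ofReal ((h (sel1 k y) * h (sel2 k ℓ y)) * ∏ i, f ‖y i‖)).toReal
      ≤ (R ^ d * f R ^ n)⁻¹ * B := by
        apply mul_le_mul_of_nonneg_left hIle (inv_nonneg.mpr hXpos.le)
    _ ≤ (R ^ d * f R ^ n)⁻¹ * (C * t ^ ((d:ℝ) - (n:ℝ)*β) * (R^d * f R^n)) :=
        mul_le_mul_of_nonneg_left hkey (inv_nonneg.mpr hXpos.le)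
    _ = C * t ^ ((d:ℝ) - (n:ℝ)*β) := by
        rw [show (R^d * f R^n)⁻¹ * (C * t ^ ((d:ℝ) - (n:ℝ)*β) * (R^d * f R^n)) =
          C * t ^ ((d:ℝ) - (n:ℝ)*β) * ((R^d * f R^n)⁻¹ * (R^d * f R^n)) from by ring,
          inv_mul_cancel₀ hXpos.ne', mul_one]
end
end
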